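/- arXiv:2406.06884 — 5 statements merged into one kernel-verified Lean document; each statement's English description precedes it below -/
import Mathlib

section
/- Let P be an ε-uniform (δ,s,C₁)-set of δ-squares, with uniformity parameter T. Then for each dyadic scale δ ≤ ρ ≤ 1 (of the form 2^{-jT}), the set P_ρ of ρ-squares containing an element of P is a (ρ, s, 2^{4T}·C₁)-set. Moreover |P_ρ| ≥ c·C₁^{-1}·ρ^{-s} for an absolute constant c > 0. -/
open Set

noncomputable def sqCount (P : Set (ℝ × ℝ)) (ρ : ℝ) (n k : ℤ) : ℕ :=
  (P ∩ (Set.Ico ((n : ℝ) * ρ) (((n : ℝ) + 1) * ρ) ×ˢ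
        Set.Ico ((k : ℝ) * ρ) (((k : ℝ) + 1) * ρ))).ncard

/-!
Let `g` send a point to the lower-left corner of its dyadic `ρ`-square, so that `P_ρ = g '' P`.
Uniformity says that all fibres of `g` over `P` have the same size `N`, hence `|P| = N |P_ρ|`,
and `g` moves points by at most `ρ` in the sup metric of `ℝ × ℝ`. A fibre lies in a `ρ`-ball,
so `N ≤ C ρ^s |P| = C ρ^s N |P_ρ|`, which is the lower bound. The fibres over
`P_ρ ∩ B(x, r)` lie in `B(x, r + ρ) ⊆ B(x, 2r)`, which is covered by four `r`-balls, so
`N |P_ρ ∩ B(x, r)| ≤ 4 C r^s N |P_ρ|`; and `4 ≤ 2^{4T}`.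
-/

open Metric

section Fibers

variable {α β : Type*} {P : Set α} {f : α → β} {N : ℕ}

theorem Set.ncard_inter_preimage_eq_mul (hP : P.Finite)
    (hN : ∀ p ∈ P, (P ∩ f ⁻¹' {f p}).ncard = N) {S : Set β} (hS : S ⊆ f '' P) :
    (P ∩ f ⁻¹' S).ncard = S.ncard * N := by
  induction S, (hP.image f).subset hS using Set.Finite.induction_on with
  | empty => simp
  | @insert q S hqS hSfin ih =>
    obtain ⟨p, hp, rfl⟩ := hS (mem_insert _ _)
    have hdisj : Disjoint (P ∩ f ⁻¹' {f p}) (P ∩ f ⁻¹' S) :=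
      ((disjoint_singleton_left.2 hqS).preimage f).mono inter_subset_right inter_subset_right
    rw [insert_eq, preimage_union, inter_union_distrib_left,
      ncard_union_eq hdisj (hP.inter_of_left _) (hP.inter_of_left _), hN p hp,
      ih ((subset_insert _ _).trans hS), ← insert_eq, ncard_insert_of_notMem hqS hSfin]
    ring

theorem Set.ncard_eq_ncard_image_mul (hP : P.Finite)
    (hN : ∀ p ∈ P, (P ∩ f ⁻¹' {f p}).ncard = N) : P.ncard = (f '' P).ncard * N := by
  rw [← ncard_inter_preimage_eq_mul hP hN subset_rfl,
    inter_eq_left.2 (subset_preimage_image f P)]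

theorem Set.ncard_fiber_ne_zero (hP : P.Finite) (hN : ∀ p ∈ P, (P ∩ f ⁻¹' {f p}).ncard = N)
    (hne : P.Nonempty) : N ≠ 0 := by
  obtain ⟨p, hp⟩ := hne
  exact hN p hp ▸ ncard_ne_zero_of_mem ⟨hp, rfl⟩ (hP.inter_of_left _)

end Fibers

section Displacement

variable {α : Type*} [PseudoMetricSpace α] {P : Set α} {f : α → α} {N : ℕ} {ρ : ℝ}

theorem Set.ncard_image_inter_closedBall_mul_le (hP : P.Finite)
    (hN : ∀ p ∈ P, (P ∩ f ⁻¹' {f p}).ncard = N) (hf : ∀ p, dist p (f p) ≤ ρ) (x : α) (r : ℝ) :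
    (f '' P ∩ closedBall x r).ncard * N ≤ (P ∩ closedBall x (r + ρ)).ncard := by
  rw [← ncard_inter_preimage_eq_mul hP hN inter_subset_left]
  refine ncard_le_ncard (inter_subset_inter_right _ fun p hp => ?_) (hP.inter_of_left _)
  calc dist p x ≤ dist p (f p) + dist (f p) x := dist_triangle _ _ _
    _ ≤ r + ρ := by linarith [hf p, mem_closedBall.1 hp.2]

theorem Set.one_le_mul_ncard_image (hP : P.Finite) (hne : P.Nonempty)
    (hN : ∀ p ∈ P, (P ∩ f ⁻¹' {f p}).ncard = N) (hf : ∀ p, dist p (f p) ≤ ρ) {M : ℝ}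
    (hM : ∀ y, ((P ∩ closedBall y ρ).ncard : ℝ) ≤ M * P.ncard) :
    1 ≤ M * (f '' P).ncard := by
  obtain ⟨p, hp⟩ := hne
  have hN0 : (0 : ℝ) < N := by
    exact_mod_cast Nat.pos_of_ne_zero (ncard_fiber_ne_zero hP hN ⟨p, hp⟩)
  have hfiber : (N : ℝ) ≤ (P ∩ closedBall (f p) ρ).ncard := by
    rw [← hN p hp]
    exact_mod_cast ncard_le_ncard (inter_subset_inter_right _ fun a (ha : f a = f p) => ha ▸ hf a)
      (hP.inter_of_left _)
  refine le_of_mul_le_mul_left ?_ hN0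
  calc (N : ℝ) * 1 ≤ M * P.ncard := by linarith [hM (f p)]
    _ = N * (M * (f '' P).ncard) := by rw [ncard_eq_ncard_image_mul hP hN]; push_cast; ring

end Displacement

theorem Real.closedBall_two_mul_subset (a r : ℝ) :
    closedBall a (2 * r) ⊆ closedBall (a - r) r ∪ closedBall (a + r) r := by
  intro y hy
  simp only [Real.closedBall_eq_Icc, mem_union, mem_Icc] at hy ⊢
  rcases le_total y a with h | h
  · left; constructor <;> linarith
  · right; constructor <;> linarith

theorem Prod.closedBall_two_mul_subset (x : ℝ × ℝ) (r : ℝ) :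
    closedBall x (2 * r) ⊆
      ⋃ c ∈ ({x.1 - r, x.1 + r} : Finset ℝ) ×ˢ ({x.2 - r, x.2 + r} : Finset ℝ),
        closedBall c r := by
  intro y hy
  rw [← closedBall_prod_same] at hy
  obtain ⟨h₁, h₂⟩ := hy
  simp only [mem_iUnion, exists_prop, Prod.exists]
  rcases Real.closedBall_two_mul_subset _ _ h₁ with h₁ | h₁ <;>
  rcases Real.closedBall_two_mul_subset _ _ h₂ with h₂ | h₂ <;>
  refine ⟨_, _, ?_, by rw [← closedBall_prod_same]; exact ⟨h₁, h₂⟩⟩ <;> simp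

theorem Set.ncard_inter_closedBall_two_mul_le {P : Set (ℝ × ℝ)} (hP : P.Finite) {r M : ℝ}
    (hM : ∀ y, ((P ∩ closedBall y r).ncard : ℝ) ≤ M) (x : ℝ × ℝ) :
    ((P ∩ closedBall x (2 * r)).ncard : ℝ) ≤ 4 * M := by
  set F := ({x.1 - r, x.1 + r} : Finset ℝ) ×ˢ ({x.2 - r, x.2 + r} : Finset ℝ)
  have hF : F.card ≤ 4 := by
    rw [Finset.card_product]
    exact Nat.mul_le_mul Finset.card_le_two Finset.card_le_two
  have hcover : P ∩ closedBall x (2 * r) ⊆ ⋃ c ∈ F, P ∩ closedBall c r := by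
    rw [← inter_iUnion₂]
    exact inter_subset_inter_right _ (Prod.closedBall_two_mul_subset x r)
  calc ((P ∩ closedBall x (2 * r)).ncard : ℝ)
      ≤ ∑ c ∈ F, ((P ∩ closedBall c r).ncard : ℝ) := by
        exact_mod_cast (ncard_le_ncard hcover (F.finite_toSet.biUnion fun _ _ =>
          hP.inter_of_left _)).trans (F.set_ncard_biUnion_le _)
    _ ≤ F.card * M := by
        simpa using Finset.sum_le_sum fun c _ => hM c
    _ ≤ 4 * M := by
        have hM0 : 0 ≤ M := (Nat.cast_nonneg _).trans (hM x)
        gcongr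
        exact_mod_cast hF

theorem Set.ncard_image_inter_closedBall_le {P : Set (ℝ × ℝ)} {f : ℝ × ℝ → ℝ × ℝ} {N : ℕ}
    {ρ r M : ℝ} (hP : P.Finite) (hne : P.Nonempty) (hN : ∀ p ∈ P, (P ∩ f ⁻¹' {f p}).ncard = N)
    (hf : ∀ p, dist p (f p) ≤ ρ) (hρr : ρ ≤ r)
    (hM : ∀ y, ((P ∩ closedBall y r).ncard : ℝ) ≤ M * P.ncard) (x : ℝ × ℝ) :
    ((f '' P ∩ closedBall x r).ncard : ℝ) ≤ 4 * M * (f '' P).ncard := by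
  have hN0 : (0 : ℝ) < N := by exact_mod_cast Nat.pos_of_ne_zero (ncard_fiber_ne_zero hP hN hne)
  refine le_of_mul_le_mul_right ?_ hN0
  calc ((f '' P ∩ closedBall x r).ncard : ℝ) * N ≤ (P ∩ closedBall x (r + ρ)).ncard := by
        exact_mod_cast ncard_image_inter_closedBall_mul_le hP hN hf x r
    _ ≤ (P ∩ closedBall x (2 * r)).ncard := by
        exact_mod_cast ncard_le_ncard
          (inter_subset_inter_right _ (closedBall_subset_closedBall (by linarith)))
          (hP.inter_of_left _)
    _ ≤ 4 * (M * P.ncard) := ncard_inter_closedBall_two_mul_le hP hM x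
    _ = 4 * M * (f '' P).ncard * N := by
        rw [ncard_eq_ncard_image_mul hP hN]; push_cast; ring

noncomputable def gridCorner (ρ : ℝ) (p : ℝ × ℝ) : ℝ × ℝ :=
  ((⌊p.1 / ρ⌋ : ℝ) * ρ, (⌊p.2 / ρ⌋ : ℝ) * ρ)

section GridCorner

variable {ρ : ℝ}

theorem floor_div_mul_eq_iff (hρ : 0 < ρ) (x : ℝ) (n : ℤ) :
    (⌊x / ρ⌋ : ℝ) * ρ = n * ρ ↔ x ∈ Ico (n * ρ) ((n + 1) * ρ) := by
  rw [mul_left_inj' hρ.ne', Int.cast_inj, Int.floor_eq_iff, mem_Ico, le_div_iff₀ hρ,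
    div_lt_iff₀ hρ]

theorem abs_sub_floor_div_mul_le (hρ : 0 < ρ) (x : ℝ) : |x - ⌊x / ρ⌋ * ρ| ≤ ρ := by
  obtain ⟨h₁, h₂⟩ := (floor_div_mul_eq_iff hρ x ⌊x / ρ⌋).1 rfl
  rw [abs_le]
  constructor <;> linarith

theorem dist_gridCorner_le (hρ : 0 < ρ) (p : ℝ × ℝ) : dist p (gridCorner ρ p) ≤ ρ :=
  max_le (abs_sub_floor_div_mul_le hρ p.1) (abs_sub_floor_div_mul_le hρ p.2)

theorem sqCount_eq_ncard_fiber (hρ : 0 < ρ) (P : Set (ℝ × ℝ)) (n k : ℤ) :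
    sqCount P ρ n k = (P ∩ gridCorner ρ ⁻¹' {((n : ℝ) * ρ, (k : ℝ) * ρ)}).ncard := by
  unfold sqCount
  congr 1
  ext p
  simp [gridCorner, Prod.ext_iff, floor_div_mul_eq_iff hρ]

theorem sqCount_floor_eq_ncard_fiber (hρ : 0 < ρ) (P : Set (ℝ × ℝ)) (p : ℝ × ℝ) :
    sqCount P ρ ⌊p.1 / ρ⌋ ⌊p.2 / ρ⌋ = (P ∩ gridCorner ρ ⁻¹' {gridCorner ρ p}).ncard :=
  sqCount_eq_ncard_fiber hρ P _ _

theorem sqCount_floor_ne_zero (hρ : 0 < ρ) {P : Set (ℝ × ℝ)} (hP : P.Finite) {p : ℝ × ℝ}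
    (hp : p ∈ P) : sqCount P ρ ⌊p.1 / ρ⌋ ⌊p.2 / ρ⌋ ≠ 0 := by
  rw [sqCount_floor_eq_ncard_fiber hρ]
  exact ncard_ne_zero_of_mem ⟨hp, rfl⟩ (hP.inter_of_left _)

theorem setOf_sqCount_ne_zero_eq_image (hρ : 0 < ρ) {P : Set (ℝ × ℝ)} (hP : P.Finite) :
    {q : ℝ × ℝ | ∃ n k : ℤ, q = ((n : ℝ) * ρ, (k : ℝ) * ρ) ∧ sqCount P ρ n k ≠ 0} =
      gridCorner ρ '' P := by
  ext q
  constructor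
  · rintro ⟨n, k, rfl, hnk⟩
    rw [sqCount_eq_ncard_fiber hρ] at hnk
    obtain ⟨p, hp, hpq⟩ := nonempty_of_ncard_ne_zero hnk
    exact ⟨p, hp, hpq⟩
  · rintro ⟨p, hp, rfl⟩
    exact ⟨_, _, rfl, sqCount_floor_ne_zero hρ hP hp⟩

theorem ncard_fiber_gridCorner_eq (hρ : 0 < ρ) {P : Set (ℝ × ℝ)} (hP : P.Finite)
    (hunif : ∀ n₁ k₁ n₂ k₂ : ℤ, sqCount P ρ n₁ k₁ ≠ 0 → sqCount P ρ n₂ k₂ ≠ 0 →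
      sqCount P ρ n₁ k₁ = sqCount P ρ n₂ k₂)
    {p₀ : ℝ × ℝ} (hp₀ : p₀ ∈ P) (p : ℝ × ℝ) (hp : p ∈ P) :
    (P ∩ gridCorner ρ ⁻¹' {gridCorner ρ p}).ncard =
      (P ∩ gridCorner ρ ⁻¹' {gridCorner ρ p₀}).ncard := by
  simp only [← sqCount_floor_eq_ncard_fiber hρ]
  exact hunif _ _ _ _ (sqCount_floor_ne_zero hρ hP hp) (sqCount_floor_ne_zero hρ hP hp₀)

end GridCorner

/-- if `P` is an ε-uniform `(δ,s,C₁)`-set then at every coarser dyadic scale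
`ρ = 2^{-jT}` the set `P_ρ` of nonempty ρ-squares is a `(ρ,s,2^{4T}C₁)`-set and
`|P_ρ| ≥ c C₁⁻¹ ρ^{-s}` for an absolute constant `c > 0`. -/
theorem stmt1 :
    ∃ c : ℝ, 0 < c ∧
      ∀ (T m : ℕ), 0 < T →
      ∀ (δ s C₁ : ℝ), δ = (2 : ℝ) ^ (-(m * T : ℤ)) → 0 < s → s ≤ 2 → 1 ≤ C₁ →
      ∀ P : Set (ℝ × ℝ), P.Finite → P.Nonempty →
      (∀ (x : ℝ × ℝ) (r : ℝ), δ ≤ r → r ≤ 1 →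
        ((P ∩ Metric.closedBall x r).ncard : ℝ) ≤ C₁ * r ^ s * (P.ncard : ℝ)) →
      (∀ j : ℕ, j ≤ m → ∀ n₁ k₁ n₂ k₂ : ℤ,
        sqCount P ((2 : ℝ) ^ (-(j * T : ℤ))) n₁ k₁ ≠ 0 →
        sqCount P ((2 : ℝ) ^ (-(j * T : ℤ))) n₂ k₂ ≠ 0 →
        sqCount P ((2 : ℝ) ^ (-(j * T : ℤ))) n₁ k₁ =
          sqCount P ((2 : ℝ) ^ (-(j * T : ℤ))) n₂ k₂) →
      ∀ j : ℕ, j ≤ m →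
        (∀ (x : ℝ × ℝ) (r : ℝ), (2 : ℝ) ^ (-(j * T : ℤ)) ≤ r → r ≤ 1 →
          (({q : ℝ × ℝ | ∃ n k : ℤ,
              q = ((n : ℝ) * (2 : ℝ) ^ (-(j * T : ℤ)), (k : ℝ) * (2 : ℝ) ^ (-(j * T : ℤ))) ∧
              sqCount P ((2 : ℝ) ^ (-(j * T : ℤ))) n k ≠ 0} ∩
                Metric.closedBall x r).ncard : ℝ) ≤
            2 ^ (4 * T) * C₁ * r ^ s *
              (({q : ℝ × ℝ | ∃ n k : ℤ,
                  q = ((n : ℝ) * (2 : ℝ) ^ (-(j * T : ℤ)), (k : ℝ) * (2 : ℝ) ^ (-(j * T : ℤ))) ∧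
                  sqCount P ((2 : ℝ) ^ (-(j * T : ℤ))) n k ≠ 0}).ncard : ℝ)) ∧
        c * C₁⁻¹ * ((2 : ℝ) ^ (-(j * T : ℤ))) ^ (-s) ≤
          (({q : ℝ × ℝ | ∃ n k : ℤ,
              q = ((n : ℝ) * (2 : ℝ) ^ (-(j * T : ℤ)), (k : ℝ) * (2 : ℝ) ^ (-(j * T : ℤ))) ∧
              sqCount P ((2 : ℝ) ^ (-(j * T : ℤ))) n k ≠ 0}).ncard : ℝ) := by
  refine ⟨1, one_pos, fun T m hT δ s C₁ hδ _ _ hC P hP ⟨p₀, hp₀⟩ hfrost hunif j hj => ?_⟩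
  set ρ : ℝ := (2 : ℝ) ^ (-(j * T : ℤ))
  have hρ : 0 < ρ := by positivity
  have hρ1 : ρ ≤ 1 := zpow_le_one_of_nonpos₀ one_le_two (neg_nonpos.2 (by positivity))
  have hδρ : δ ≤ ρ := hδ ▸ zpow_le_zpow_right₀ one_le_two (by gcongr)
  have hfrostρ (x : ℝ × ℝ) (r : ℝ) (hr : ρ ≤ r) (hr1 : r ≤ 1) :=
    hfrost x r (hδρ.trans hr) hr1
  have hN := ncard_fiber_gridCorner_eq hρ hP (hunif j hj) hp₀
  rw [setOf_sqCount_ne_zero_eq_image hρ hP]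
  refine ⟨fun x r hr hr1 => ?_, ?_⟩
  · have h4 : (4 : ℝ) ≤ 2 ^ (4 * T) := by
      calc (4 : ℝ) ≤ 2 ^ 4 := by norm_num
        _ ≤ 2 ^ (4 * T) := pow_le_pow_right₀ one_le_two (by omega)
    calc _ ≤ 4 * (C₁ * r ^ s) * _ :=
          ncard_image_inter_closedBall_le hP ⟨p₀, hp₀⟩ hN (dist_gridCorner_le hρ) hr
            (fun y => hfrostρ y r hr hr1) x
      _ ≤ 2 ^ (4 * T) * C₁ * r ^ s * _ := by
          rw [← mul_assoc]
          have := Real.rpow_nonneg (hρ.le.trans hr) s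
          gcongr
  · rw [one_mul, Real.rpow_neg hρ.le, ← mul_inv, inv_le_iff_one_le_mul₀' (by positivity)]
    exact one_le_mul_ncard_image hP ⟨p₀, hp₀⟩ hN (dist_gridCorner_le hρ)
      fun y => hfrostρ y ρ le_rfl hρ1
end

section
/- Every ε-uniform (δ,s,K)-Katz-Tao set S of δ-intervals (with uniformity parameter T and δ = 2^{-mT}) can be partitioned into at most 2^m · K sets S_i, each of which is a (δ, s, 2^{2T})-Katz-Tao set. -/
/-!
Colour the points of `S` by their rank in `S` modulo `N = ⌊K⌋₊`. A closed ball is an interval,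
so the points of `S` in it have consecutive ranks, and among `L` consecutive ranks at most
`L / N + 1` share a residue. Since `L ≤ K (r/δ)^s ≤ 2N (r/δ)^s` and `(r/δ)^s ≥ 1`, each colour
class meets the ball in at most `3 (r/δ)^s ≤ 2^{2T} (r/δ)^s` points.
-/

open Set

noncomputable def intCount (S : Set ℝ) (ρ : ℝ) (n : ℤ) : ℕ :=
  (S ∩ Set.Ico ((n : ℝ) * ρ) (((n : ℝ) + 1) * ρ)).ncard

def KatzTao (δ s K : ℝ) (A : Set ℝ) : Prop :=
  ∀ (x r : ℝ), δ ≤ r → r ≤ 1 → ((A ∩ Metric.closedBall x r).ncard : ℝ) ≤ K * (r / δ) ^ s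

theorem Nat.ncard_le_div_add_one_of_subset_Ico_of_modEq {A : Set ℕ} {a L N : ℕ}
    (hA : A ⊆ Ico a (a + L)) (hmod : ∀ k ∈ A, ∀ l ∈ A, k ≡ l [MOD N]) :
    A.ncard ≤ L / N + 1 := by
  calc A.ncard ≤ (Finset.range (L / N + 1) : Set ℕ).ncard := by
        refine ncard_le_ncard_of_injOn (fun k => (k - a) / N) (fun k hk => ?_) ?_
        · obtain ⟨-, hkL⟩ := hA hk
          simp only [Finset.coe_range, mem_Iio, Nat.lt_succ_iff]
          exact Nat.div_le_div_right (by omega)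
        · intro k hk l hl hkl
          have hka := (hA hk).1
          have hla := (hA hl).1
          have hmod' : k - a ≡ l - a [MOD N] := Nat.ModEq.add_left_cancel' a <| by
            rw [Nat.add_sub_cancel' hka, Nat.add_sub_cancel' hla]
            exact hmod k hk l hl
          have hkl : (k - a) / N = (l - a) / N := hkl
          have hsub : k - a = l - a := by
            rw [← Nat.div_add_mod (k - a) N, ← Nat.div_add_mod (l - a) N, hkl, hmod']
          omega
    _ = L / N + 1 := by simp

theorem Set.biUnion_range_sep_mod_eq {α : Type*} (S : Set α) (f : α → ℕ) {N : ℕ} (hN : 0 < N) :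
    ⋃ i ∈ Finset.range N, {x ∈ S | f x % N = i} = S := by
  ext x
  simp only [mem_iUnion, mem_sep_iff, Finset.mem_range, exists_prop]
  exact ⟨fun ⟨_, _, hx, _⟩ => hx, fun hx => ⟨f x % N, Nat.mod_lt _ hN, hx, rfl⟩⟩

namespace Set

variable {α : Type*} [LinearOrder α] {S C : Set α}

noncomputable def rank (S : Set α) (x : α) : ℕ := (S ∩ Iio x).ncard

theorem rank_strictMonoOn (hS : S.Finite) : StrictMonoOn (rank S) S := by
  intro p hp q _ hpq
  refine ncard_lt_ncard ⟨fun y hy => ⟨hy.1, hy.2.trans hpq⟩, fun h => ?_⟩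
    (hS.subset inter_subset_left)
  exact lt_irrefl p (h ⟨hp, hpq⟩).2

theorem rank_lt_rank_add_ncard (hS : S.Finite) (hC : C.OrdConnected) {p q : α}
    (hp : p ∈ S ∩ C) (hq : q ∈ S ∩ C) (hpq : p ≤ q) :
    rank S q < rank S p + (S ∩ C).ncard := by
  have hcover : insert q (S ∩ Iio q) ⊆ (S ∩ Iio p) ∪ (S ∩ C) := by
    rintro y (rfl | ⟨hyS, hyq⟩)
    · exact Or.inr hq
    · rcases lt_or_ge y p with hyp | hpy
      · exact Or.inl ⟨hyS, hyp⟩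
      · exact Or.inr ⟨hyS, hC.out hp.2 hq.2 ⟨hpy, hyq.le⟩⟩
  calc rank S q < (insert q (S ∩ Iio q)).ncard :=
        ncard_lt_ncard (ssubset_insert fun h => lt_irrefl q h.2)
          ((hS.subset inter_subset_left).insert q)
    _ ≤ ((S ∩ Iio p) ∪ (S ∩ C)).ncard :=
        ncard_le_ncard hcover ((hS.subset inter_subset_left).union (hS.subset inter_subset_left))
    _ ≤ rank S p + (S ∩ C).ncard := ncard_union_le _ _

theorem ncard_rank_mod_eq_inter_le (hS : S.Finite) (hC : C.OrdConnected) (N i : ℕ) :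
    ({x ∈ S | rank S x % N = i} ∩ C).ncard ≤ (S ∩ C).ncard / N + 1 := by
  set G := {x ∈ S | rank S x % N = i} ∩ C
  have hGS : G ⊆ S ∩ C := fun x hx => ⟨hx.1.1, hx.2⟩
  rcases (S ∩ C).eq_empty_or_nonempty with hempty | hne
  · simp [subset_empty_iff.mp (hempty ▸ hGS)]
  obtain ⟨p, hp, hp_min⟩ := exists_min_image (S ∩ C) id (hS.subset inter_subset_left) hne
  rw [← ((rank_strictMonoOn hS).injOn.mono fun x hx => (hGS hx).1).ncard_image]
  refine Nat.ncard_le_div_add_one_of_subset_Ico_of_modEq (a := rank S p) ?_ ?_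
  · rintro _ ⟨q, hq, rfl⟩
    exact ⟨(rank_strictMonoOn hS).monotoneOn hp.1 (hGS hq).1 (hp_min q (hGS hq)),
      rank_lt_rank_add_ncard hS hC hp (hGS hq) (hp_min q (hGS hq))⟩
  · rintro _ ⟨k, hk, rfl⟩ _ ⟨l, hl, rfl⟩
    exact hk.1.2.trans hl.1.2.symm

end Set

theorem KatzTao.mono {δ s K K' : ℝ} {A : Set ℝ} (hδ : 0 < δ) (hKK' : K ≤ K')
    (h : KatzTao δ s K A) : KatzTao δ s K' A := fun x r hδr hr1 =>
  (h x r hδr hr1).trans <|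
    mul_le_mul_of_nonneg_right hKK' (Real.rpow_nonneg (div_nonneg (hδ.le.trans hδr) hδ.le) s)

theorem KatzTao.sep_rank_mod_floor {δ s K : ℝ} {S : Set ℝ} (hKT : KatzTao δ s K S) (hδ : 0 < δ)
    (hs : 0 ≤ s) (hK : 1 ≤ K) (hS : S.Finite) (i : ℕ) :
    KatzTao δ s 3 {x ∈ S | S.rank x % ⌊K⌋₊ = i} := by
  intro x r hδr hr1
  set N := ⌊K⌋₊
  have hy : 1 ≤ (r / δ) ^ s := Real.one_le_rpow ((one_le_div hδ).mpr hδr) hs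
  have hN : (1 : ℝ) ≤ N := by exact_mod_cast Nat.le_floor (by exact_mod_cast hK)
  have hKN : K ≤ 2 * N := by linarith [Nat.lt_floor_add_one K]
  have hball : (Metric.closedBall x r).OrdConnected := by
    rw [Real.closedBall_eq_Icc]; exact ordConnected_Icc
  calc (({x ∈ S | S.rank x % N = i} ∩ Metric.closedBall x r).ncard : ℝ)
      ≤ (((S ∩ Metric.closedBall x r).ncard / N : ℕ) : ℝ) + 1 := by
        exact_mod_cast S.ncard_rank_mod_eq_inter_le hS hball N i
    _ ≤ (S ∩ Metric.closedBall x r).ncard / N + 1 := by gcongr; exact Nat.cast_div_le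
    _ ≤ K * (r / δ) ^ s / N + 1 := by gcongr; exact hKT x r hδr hr1
    _ ≤ 2 * (r / δ) ^ s + 1 := by
        gcongr
        rw [div_le_iff₀ (by linarith)]
        nlinarith
    _ ≤ 3 * (r / δ) ^ s := by linarith

theorem stmt2_general (T m : ℕ) (hT : 0 < T) (δ s K : ℝ) (hδ : δ = (2 : ℝ) ^ (-(m * T : ℤ)))
    (hs : 0 < s) (hK : 1 ≤ K)
    (S : Set ℝ) (hfin : S.Finite)
    (hKT : KatzTao δ s K S) :
    ∃ (N : ℕ) (F : ℕ → Set ℝ), (N : ℝ) ≤ 2 ^ m * K ∧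
      (∀ i < N, F i ⊆ S) ∧ (⋃ i ∈ Finset.range N, F i) = S ∧
      (∀ i j, i < j → j < N → Disjoint (F i) (F j)) ∧
      ∀ i < N, KatzTao δ s (2 ^ (2 * T)) (F i) := by
  have hδ0 : 0 < δ := hδ ▸ by positivity
  refine ⟨⌊K⌋₊, fun i => {x ∈ S | S.rank x % ⌊K⌋₊ = i}, ?_, fun i _ => sep_subset _ _,
    S.biUnion_range_sep_mod_eq _ (Nat.floor_pos.2 hK), ?_, fun i _ => ?_⟩
  · calc (⌊K⌋₊ : ℝ) ≤ K := Nat.floor_le (by linarith)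
      _ ≤ 2 ^ m * K := le_mul_of_one_le_left (by linarith) (one_le_pow₀ one_le_two)
  · exact fun i j hij _ => disjoint_left.2 fun x hi hj => hij.ne (hi.2.symm.trans hj.2)
  · refine (hKT.sep_rank_mod_floor hδ0 hs.le hK hfin i).mono hδ0 ?_
    calc (3 : ℝ) ≤ 2 ^ 2 := by norm_num
      _ ≤ 2 ^ (2 * T) := pow_le_pow_right₀ one_le_two (by omega)

/-- an ε-uniform `(δ,s,K)`-Katz-Tao set of δ-intervals can be partitioned into
at most `2^m · K` sets, each a `(δ,s,2^{2T})`-Katz-Tao set. -/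
theorem stmt2 (T m : ℕ) (hT : 0 < T) (δ s K : ℝ) (hδ : δ = (2 : ℝ) ^ (-(m * T : ℤ)))
    (hs : 0 < s) (hK : 1 ≤ K)
    (S : Set ℝ) (hfin : S.Finite) (hsub : S ⊆ Set.Icc 0 1)
    (hKT : KatzTao δ s K S)
    (hunif : ∀ j : ℕ, j ≤ m → ∀ n₁ n₂ : ℤ,
      intCount S ((2 : ℝ) ^ (-(j * T : ℤ))) n₁ ≠ 0 →
      intCount S ((2 : ℝ) ^ (-(j * T : ℤ))) n₂ ≠ 0 →
      intCount S ((2 : ℝ) ^ (-(j * T : ℤ))) n₁ = intCount S ((2 : ℝ) ^ (-(j * T : ℤ))) n₂) :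
    ∃ (N : ℕ) (F : ℕ → Set ℝ), (N : ℝ) ≤ 2 ^ m * K ∧
      (∀ i < N, F i ⊆ S) ∧ (⋃ i ∈ Finset.range N, F i) = S ∧
      (∀ i j, i < j → j < N → Disjoint (F i) (F j)) ∧
      ∀ i < N, KatzTao δ s (2 ^ (2 * T)) (F i) :=
  stmt2_general T m hT δ s K hδ hs hK S hfin hKT
end

section
/- Let ε > 0 be small enough and set ε₀ = ε^{2/ε}. Then for each non-decreasing 1-Lipschitz function f : [0,1] → [0,1] there exist a partition 0 = A₁ < A₂ < ... < A_{L+1} = 1 and a sequence 0 ≤ t₁ < t₂ < ... < t_L ≤ 1 such that for each 1 ≤ l ≤ L: (a) A_{l+1} − A_l ≥ ε₀/ε; (b) f(x) ≥ f(A_l) + t_l(x − A_l) − ε(A_{l+1} − A_l) for all x ∈ [A_l, A_{l+1}]; (c) f(A_{l+1}) ≤ f(A_l) + (t_l + 3ε)(A_{l+1} − A_l); (d) t₁ ≤ f(1) − f(0) + ε. -/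
open Set

private lemma mylip {f : ℝ → ℝ}
    (hlip : ∀ x ∈ Icc (0:ℝ) 1, ∀ y ∈ Icc (0:ℝ) 1, |f x - f y| ≤ |x - y|)
    {x y : ℝ} (hx : 0 ≤ x) (hxy : x ≤ y) (hy : y ≤ 1) : f y - f x ≤ y - x := by
  have h := hlip y ⟨hx.trans hxy, hy⟩ x ⟨hx, hxy.trans hy⟩
  have h2 : f y - f x ≤ |f y - f x| := le_abs_self _
  have h3 : |y - x| = y - x := abs_of_nonneg (by linarith)
  rw [h3] at h
  linarith

private lemma step {f : ℝ → ℝ} {ε : ℝ} (hε : 0 < ε) (hε2 : ε ≤ 1/2)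
    (hmono : MonotoneOn f (Icc 0 1))
    (hlip : ∀ x ∈ Icc (0:ℝ) 1, ∀ y ∈ Icc (0:ℝ) 1, |f x - f y| ≤ |x - y|)
    {A τ : ℝ} {l : ℕ}
    (hA0 : 0 ≤ A) (hA1 : A < 1)
    (hw : ε ^ l ≤ 1 - A)
    (hτl : (l : ℝ) * ε ≤ τ)
    (hsec : ∀ x, A < x → x ≤ 1 → τ * (x - A) ≤ f x - f A) :
    ∃ t R : ℝ,
      ε ^ ((2:ℝ)/ε) / ε ≤ R - A ∧ R ≤ 1 ∧
      τ ≤ t ∧ t ≤ 1 ∧ t * (1 - A) ≤ f 1 - f A ∧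
      (∀ x, A ≤ x → x ≤ 1 → f A + t * (x - A) - ε * (R - A) ≤ f x) ∧
      f R ≤ f A + (t + ε) * (R - A) ∧
      (∀ x, R < x → x ≤ 1 → (t + ε) * (x - R) ≤ f x - f R) := by
  classical
  have hε1 : ε < 1 := by linarith
  have hτ0 : 0 ≤ τ := le_trans (by positivity) hτl
  have hpowpos : ∀ k : ℕ, (0:ℝ) < ε ^ k := fun k => pow_pos hε k
  have hpowle : ∀ k : ℕ, l ≤ k → ε ^ k ≤ 1 - A := fun k hk =>
    (pow_le_pow_of_le_one hε.le hε1.le hk).trans hw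
  set g : ℝ → ℝ := fun x => (f x - f A) / (x - A) with hg
  set tt : ℕ → ℝ := fun k => sInf (g '' Icc (A + ε ^ k) 1) with htt
  have hAx : ∀ k : ℕ, ∀ x : ℝ, A + ε ^ k ≤ x → 0 ≤ x ∧ A < x :=
    fun k x hx => ⟨le_trans hA0 (by linarith [hpowpos k]), by linarith [hpowpos k]⟩
  have hgnn : ∀ k : ℕ, ∀ x : ℝ, A + ε ^ k ≤ x → x ≤ 1 → 0 ≤ g x := by
    intro k x hx1 hx2
    obtain ⟨hx0, hAlt⟩ := hAx k x hx1
    have hfx : f A ≤ f x := hmono ⟨hA0, hA1.le⟩ ⟨hx0, hx2⟩ hAlt.le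
    have hxa : (0:ℝ) < x - A := by linarith
    show (0:ℝ) ≤ (f x - f A) / (x - A)
    exact div_nonneg (by linarith) (by linarith)
  have hne : ∀ k : ℕ, ε ^ k ≤ 1 - A → (g '' Icc (A + ε ^ k) 1).Nonempty :=
    fun k hk => ⟨g 1, ⟨1, ⟨by linarith, le_refl 1⟩, rfl⟩⟩
  have hbdd : ∀ k : ℕ, BddBelow (g '' Icc (A + ε ^ k) 1) := by
    intro k
    refine ⟨0, ?_⟩
    rintro y ⟨x, ⟨hx1, hx2⟩, rfl⟩
    exact hgnn k x hx1 hx2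
  have htt_le : ∀ k : ℕ, ∀ x : ℝ, A + ε ^ k ≤ x → x ≤ 1 → tt k ≤ g x :=
    fun k x hx1 hx2 => csInf_le (hbdd k) ⟨x, ⟨hx1, hx2⟩, rfl⟩
  have hle_tt : ∀ k : ℕ, ε ^ k ≤ 1 - A → ∀ c : ℝ,
      (∀ x, A + ε ^ k ≤ x → x ≤ 1 → c ≤ g x) → c ≤ tt k := by
    intro k hk c hc
    refine le_csInf (hne k hk) ?_
    rintro y ⟨x, ⟨hx1, hx2⟩, rfl⟩
    exact hc x hx1 hx2
  have hg_mul : ∀ x : ℝ, A < x → g x * (x - A) = f x - f A := by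
    intro x hx
    exact div_mul_cancel₀ _ (by linarith : x - A ≠ 0)
  have hglb : ∀ k : ℕ, ∀ x : ℝ, A + ε ^ k ≤ x → x ≤ 1 → tt k * (x - A) ≤ f x - f A := by
    intro k x hx1 hx2
    obtain ⟨hx0, hAlt⟩ := hAx k x hx1
    have h1 : tt k * (x - A) ≤ g x * (x - A) :=
      mul_le_mul_of_nonneg_right (htt_le k x hx1 hx2) (by linarith)
    rw [hg_mul x hAlt] at h1
    exact h1
  have hτtt : ∀ k : ℕ, ε ^ k ≤ 1 - A → τ ≤ tt k := by
    intro k hk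
    refine hle_tt k hk τ ?_
    intro x hx1 hx2
    obtain ⟨hx0, hAlt⟩ := hAx k x hx1
    rw [hg, le_div_iff₀ (by linarith : (0:ℝ) < x - A)]
    exact hsec x hAlt hx2
  have htt1 : ∀ k : ℕ, ε ^ k ≤ 1 - A → tt k ≤ 1 := by
    intro k hk
    refine le_trans (htt_le k 1 (by linarith) le_rfl) ?_
    rw [hg, div_le_one (by linarith : (0:ℝ) < 1 - A)]
    exact mylip hlip hA0 hA1.le le_rfl
  set SS : ℕ → Set ℝ := fun k =>
    {x | (A + ε ^ k ≤ x ∧ x ≤ 1) ∧ f x - f A ≤ (tt k + ε) * (x - A)} with hSS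
  set RR : ℕ → ℝ := fun k => sSup (SS k) with hRR
  have hSSbdd : ∀ k : ℕ, BddAbove (SS k) := fun k => ⟨1, fun x hx => hx.1.2⟩
  have hSSne : ∀ k : ℕ, ε ^ k ≤ 1 - A → (SS k).Nonempty := by
    intro k hk
    obtain ⟨y, ⟨x, ⟨hx1, hx2⟩, rfl⟩, hlt⟩ :=
      exists_lt_of_csInf_lt (hne k hk) (show tt k < tt k + ε by linarith)
    obtain ⟨hx0, hAlt⟩ := hAx k x hx1
    refine ⟨x, ⟨hx1, hx2⟩, ?_⟩
    have := mul_le_mul_of_nonneg_right hlt.le (by linarith : (0:ℝ) ≤ x - A)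
    rw [hg_mul x hAlt] at this
    exact this
  have hRRmem1 : ∀ k : ℕ, ε ^ k ≤ 1 - A → A + ε ^ k ≤ RR k := by
    intro k hk
    obtain ⟨x, hx⟩ := hSSne k hk
    exact le_trans hx.1.1 (le_csSup (hSSbdd k) hx)
  have hRRle1 : ∀ k : ℕ, ε ^ k ≤ 1 - A → RR k ≤ 1 :=
    fun k hk => csSup_le (hSSne k hk) (fun x hx => hx.1.2)
  have httε : ∀ k : ℕ, ε ^ k ≤ 1 - A → 0 ≤ tt k + ε :=
    fun k hk => by linarith [hτtt k hk]
  have hRRc : ∀ k : ℕ, ε ^ k ≤ 1 - A → f (RR k) - f A ≤ (tt k + ε) * (RR k - A) := by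
    intro k hk
    refine le_of_forall_pos_le_add ?_
    intro η hη
    obtain ⟨x, hxS, hxgt⟩ := exists_lt_of_lt_csSup (hSSne k hk)
      (show RR k - η < RR k by linarith)
    have hxle : x ≤ RR k := le_csSup (hSSbdd k) hxS
    obtain ⟨hx0, hAlt⟩ := hAx k x hxS.1.1
    have h1 : f (RR k) - f x ≤ RR k - x := mylip hlip hx0 hxle (hRRle1 k hk)
    have h2 : f x - f A ≤ (tt k + ε) * (x - A) := hxS.2
    have h3 : (tt k + ε) * (x - A) ≤ (tt k + ε) * (RR k - A) :=
      mul_le_mul_of_nonneg_left (by linarith) (httε k hk)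
    linarith
  have hbeyond : ∀ k : ℕ, ε ^ k ≤ 1 - A → ∀ x, RR k < x → x ≤ 1 → A + ε ^ k ≤ x →
      (tt k + ε) * (x - A) ≤ f x - f A := by
    intro k hk x hx1 hx2 hx3
    by_contra h
    push_neg at h
    have : x ∈ SS k := ⟨⟨hx3, hx2⟩, h.le⟩
    have h2 : x ≤ RR k := le_csSup (hSSbdd k) this
    linarith
  -- success predicate
  set P : ℕ → Prop := fun k => ε ^ k ≤ ε * (RR k - A) with hP
  have hfail : ∀ k : ℕ, l ≤ k → ¬ P (k+1) → tt (k+1) + ε ≤ tt k := by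
    intro k hkl hnp
    have hk : ε ^ k ≤ 1 - A := hpowle k hkl
    have hk1 : ε ^ (k+1) ≤ 1 - A := hpowle (k+1) (by omega)
    have hRlt : RR (k+1) < A + ε ^ k := by
      by_contra h
      push_neg at h
      apply hnp
      rw [hP]
      have : ε * ε ^ k ≤ ε * (RR (k+1) - A) :=
        mul_le_mul_of_nonneg_left (by linarith) hε.le
      calc ε ^ (k+1) = ε * ε ^ k := by ring
        _ ≤ ε * (RR (k+1) - A) := this
    refine hle_tt k hk _ ?_
    intro x hx1 hx2
    obtain ⟨hx0, hAlt⟩ := hAx k x hx1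
    have hxk1 : A + ε ^ (k+1) ≤ x := by
      have : ε ^ (k+1) ≤ ε ^ k := by
        calc ε ^ (k+1) = ε * ε ^ k := by ring
          _ ≤ 1 * ε ^ k := mul_le_mul_of_nonneg_right hε1.le (hpowpos k).le
          _ = ε ^ k := one_mul _
      linarith
    have hb := hbeyond (k+1) hk1 x (lt_of_lt_of_le hRlt hx1) hx2 hxk1
    rw [hg, le_div_iff₀ (by linarith : (0:ℝ) < x - A)]
    exact hb
  have hchain : ∀ i : ℕ, (∀ k, l + 1 ≤ k → k ≤ l + i → ¬ P k) →
      tt (l + i) + (i : ℝ) * ε ≤ tt l := by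
    intro i
    induction i with
    | zero => intro _; simp
    | succ i ih =>
      intro h
      have h1 := hfail (l + i) (by omega) (h (l + i + 1) (by omega) (by omega))
      have h2 := ih (fun k hk1 hk2 => h k hk1 (by omega))
      have : l + (i + 1) = (l + i) + 1 := by omega
      rw [this]
      push_cast
      linarith
  have hex : ∃ k, l + 1 ≤ k ∧ P k := by
    by_contra h
    push_neg at h
    obtain ⟨n, hn⟩ := exists_nat_gt (1/ε)
    have h1 := hchain n (fun k hk1 _ => h k hk1)
    have h2 : τ ≤ tt (l + n) := hτtt _ (hpowle _ (by omega))
    have h3 : tt l ≤ 1 := htt1 l (hpowle l le_rfl)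
    have h4 : 1 < (n:ℝ) * ε := by
      rw [← div_lt_iff₀ hε] at *
      linarith
    linarith
  set k₀ := Nat.find hex with hk₀
  obtain ⟨hk₀l, hk₀P⟩ := Nat.find_spec hex
  have hk₀min : ∀ k, l + 1 ≤ k → k < k₀ → ¬ P k := by
    intro k hk1 hk2
    have := Nat.find_min hex hk2
    tauto
  have hdomk₀ : ε ^ k₀ ≤ 1 - A := hpowle k₀ (by omega)
  -- bound on k₀
  have hk₀bound : (k₀ : ℝ) ≤ 2 / ε := by
    have hch := hchain (k₀ - 1 - l) (fun k hh1 hh2 => hk₀min k hh1 (by omega))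
    have heq : l + (k₀ - 1 - l) = k₀ - 1 := by omega
    rw [heq] at hch
    have h2 : τ ≤ tt (k₀ - 1) := hτtt _ (hpowle _ (by omega))
    have h3 : tt l ≤ 1 := htt1 l (hpowle l le_rfl)
    have hcast : ((k₀ - 1 - l : ℕ) : ℝ) = (k₀ : ℝ) - 1 - l := by
      have : k₀ - 1 - l + (l + 1) = k₀ := by omega
      have := congrArg (fun m : ℕ => (m : ℝ)) this
      push_cast at this
      linarith
    rw [hcast] at hch
    -- ((k₀:ℝ) - 1 - l) * ε ≤ 1 - τ  and τ ≥ l ε  so (k₀ - 1) ε ≤ 1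
    have hexp : ((k₀:ℝ) - 1) * ε = ((k₀:ℝ) - 1 - (l:ℝ)) * ε + (l:ℝ) * ε := by ring
    have h5 : ((k₀:ℝ) - 1) * ε ≤ 1 := by linarith
    rw [le_div_iff₀ hε]
    have hexp2 : (k₀:ℝ) * ε = ((k₀:ℝ) - 1) * ε + ε := by ring
    linarith
  refine ⟨tt k₀, RR k₀, ?_, hRRle1 k₀ hdomk₀, hτtt k₀ hdomk₀, htt1 k₀ hdomk₀, ?_, ?_, ?_, ?_⟩
  · -- ε ^ (2/ε) / ε ≤ RR k₀ - A
    rw [div_le_iff₀ hε]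
    have h1 : ε ^ ((2:ℝ)/ε) ≤ ε ^ ((k₀ : ℕ) : ℝ) :=
      Real.rpow_le_rpow_of_exponent_ge hε hε1.le hk₀bound
    rw [Real.rpow_natCast] at h1
    have h2 : ε ^ k₀ ≤ ε * (RR k₀ - A) := hk₀P
    calc ε ^ ((2:ℝ)/ε) ≤ ε ^ k₀ := h1
      _ ≤ ε * (RR k₀ - A) := h2
      _ = (RR k₀ - A) * ε := by ring
  · -- t * (1 - A) ≤ f 1 - f A
    have h1 : tt k₀ ≤ g 1 := htt_le k₀ 1 (by linarith) le_rfl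
    have h2 : tt k₀ * (1 - A) ≤ g 1 * (1 - A) :=
      mul_le_mul_of_nonneg_right h1 (by linarith)
    rw [hg_mul 1 hA1] at h2
    exact h2
  · -- (b)-type
    intro x hx1 hx2
    rcases le_or_gt (A + ε ^ k₀) x with hcase | hcase
    · have := hglb k₀ x hcase hx2
      have hRA : 0 ≤ RR k₀ - A := by linarith [hRRmem1 k₀ hdomk₀, hpowpos k₀]
      have : 0 ≤ ε * (RR k₀ - A) := mul_nonneg hε.le hRA
      linarith
    · have hfx : f A ≤ f x := hmono ⟨hA0, hA1.le⟩ ⟨le_trans hA0 hx1, hx2⟩ hx1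
      have ht0 : 0 ≤ tt k₀ := le_trans hτ0 (hτtt k₀ hdomk₀)
      have ht1 : tt k₀ ≤ 1 := htt1 k₀ hdomk₀
      have h1 : tt k₀ * (x - A) ≤ x - A := by nlinarith
      have h2 : x - A ≤ ε ^ k₀ := by linarith
      have h3 : ε ^ k₀ ≤ ε * (RR k₀ - A) := hk₀P
      linarith
  · -- (c)-type
    have := hRRc k₀ hdomk₀
    linarith
  · -- beyond invariant
    intro x hx1 hx2
    have hx3 : A + ε ^ k₀ ≤ x := le_trans (hRRmem1 k₀ hdomk₀) hx1.le
    have hb := hbeyond k₀ hdomk₀ x hx1 hx2 hx3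
    have hc := hRRc k₀ hdomk₀
    have hexp : (tt k₀ + ε) * (x - RR k₀)
        = (tt k₀ + ε) * (x - A) - (tt k₀ + ε) * (RR k₀ - A) := by ring
    linarith

private lemma recdec {f : ℝ → ℝ} {ε : ℝ} (hε : 0 < ε) (hε2 : ε ≤ 1/2)
    (hmono : MonotoneOn f (Icc 0 1))
    (hlip : ∀ x ∈ Icc (0:ℝ) 1, ∀ y ∈ Icc (0:ℝ) 1, |f x - f y| ≤ |x - y|) :
    ∀ n : ℕ, ∀ A τ : ℝ, ∀ l : ℕ,
    0 ≤ A → A < 1 → ε ^ l ≤ 1 - A → (l : ℝ) * ε ≤ τ →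
    (∀ x, A < x → x ≤ 1 → τ * (x - A) ≤ f x - f A) →
    1 ≤ τ + (n : ℝ) * ε →
    ∃ (L : ℕ) (Aseq tseq : ℕ → ℝ), 1 ≤ L ∧ Aseq 1 = A ∧ Aseq (L+1) = 1 ∧
      (∀ i, 1 ≤ i → i ≤ L → Aseq i < Aseq (i+1)) ∧
      (∀ i, 1 ≤ i → i < L → tseq i < tseq (i+1)) ∧
      τ ≤ tseq 1 ∧ tseq L ≤ 1 ∧ tseq 1 * (1 - A) ≤ f 1 - f A ∧
      (∀ i, 1 ≤ i → i ≤ L →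
        ε ^ ((2:ℝ)/ε) / ε ≤ Aseq (i+1) - Aseq i ∧
        (∀ x, Aseq i ≤ x → x ≤ Aseq (i+1) →
          f (Aseq i) + tseq i * (x - Aseq i) - ε * (Aseq (i+1) - Aseq i) ≤ f x) ∧
        f (Aseq (i+1)) ≤ f (Aseq i) + (tseq i + 3*ε) * (Aseq (i+1) - Aseq i)) := by
  intro n
  induction n with
  | zero =>
    intro A τ l hA0 hA1 hw hτl hsec hfuel
    obtain ⟨t, R, s1, s2, s3τ, s31, s3f, s4, s5, s6⟩ :=
      step hε hε2 hmono hlip hA0 hA1 hw hτl hsec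
    have hτ1 : 1 ≤ τ := by push_cast at hfuel; linarith
    have hRA : 0 < R - A := lt_of_lt_of_le (by positivity) s1
    have hεA : 0 < ε * (1 - A) := mul_pos hε (by linarith)
    have hfin : 1 - R ≤ ε * (1 - A) := by
      by_contra hnf
      push_neg at hnf
      have hR1 : R < 1 := by linarith
      have h6 := s6 1 hR1 le_rfl
      have h7 : f 1 - f R ≤ 1 - R := mylip hlip (by linarith) hR1.le le_rfl
      have h9 : (1 + ε) * (1 - R) ≤ (t + ε) * (1 - R) :=
        mul_le_mul_of_nonneg_right (by linarith) (by linarith)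
      have h10 : 0 < ε * (1 - R) := mul_pos hε (by linarith)
      have h11 : (1 + ε) * (1 - R) = (1 - R) + ε * (1 - R) := by ring
      linarith
    refine ⟨1, (fun i => if i ≤ 1 then A else 1), (fun _ => t), le_rfl, by simp, by norm_num,
      ?_, ?_, by simpa using s3τ, by simpa using s31, by simpa using s3f, ?_⟩
    · intro i hi1 hi2
      have hieq : i = 1 := by omega
      subst hieq
      norm_num
      linarith
    · intro i hi1 hi2
      exact absurd hi2 (by omega)
    · intro i hi1 hi2
      have hieq : i = 1 := by omega
      subst hieq
      norm_num
      refine ⟨by linarith, ?_, ?_⟩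
      · intro x hx1 hx2
        have := s4 x hx1 hx2
        have hsl : ε * (R - A) ≤ ε * (1 - A) :=
          mul_le_mul_of_nonneg_left (by linarith) hε.le
        linarith
      · have h7 : f 1 - f R ≤ 1 - R := mylip hlip (by linarith) s2 le_rfl
        have h8 : (t + ε) * (R - A) ≤ (t + ε) * (1 - A) :=
          mul_le_mul_of_nonneg_left (by linarith) (by linarith)
        have h10 : (t + 3*ε) * (1 - A) = (t + ε) * (1 - A) + 2 * (ε * (1 - A)) := by ring
        linarith
  | succ n ih =>
    intro A τ l hA0 hA1 hw hτl hsec hfuel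
    obtain ⟨t, R, s1, s2, s3τ, s31, s3f, s4, s5, s6⟩ :=
      step hε hε2 hmono hlip hA0 hA1 hw hτl hsec
    have hτ0 : 0 ≤ τ := le_trans (by positivity) hτl
    have hRA : 0 < R - A := lt_of_lt_of_le (by positivity) s1
    have hεA : 0 < ε * (1 - A) := mul_pos hε (by linarith)
    by_cases hfin : 1 - R ≤ ε * (1 - A)
    · -- final interval
      refine ⟨1, (fun i => if i ≤ 1 then A else 1), (fun _ => t), le_rfl, by simp, by norm_num,
        ?_, ?_, by simpa using s3τ, by simpa using s31, by simpa using s3f, ?_⟩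
      · intro i hi1 hi2
        have hieq : i = 1 := by omega
        subst hieq
        norm_num
        linarith
      · intro i hi1 hi2
        exact absurd hi2 (by omega)
      · intro i hi1 hi2
        have hieq : i = 1 := by omega
        subst hieq
        norm_num
        refine ⟨by linarith, ?_, ?_⟩
        · intro x hx1 hx2
          have := s4 x hx1 hx2
          have hsl : ε * (R - A) ≤ ε * (1 - A) :=
            mul_le_mul_of_nonneg_left (by linarith) hε.le
          linarith
        · have h7 : f 1 - f R ≤ 1 - R := mylip hlip (by linarith) s2 le_rfl
          have h8 : (t + ε) * (R - A) ≤ (t + ε) * (1 - A) :=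
            mul_le_mul_of_nonneg_left (by linarith) (by linarith)
          have h10 : (t + 3*ε) * (1 - A) = (t + ε) * (1 - A) + 2 * (ε * (1 - A)) := by ring
          linarith
    · -- recurse
      push_neg at hfin
      have hR1 : R < 1 := by linarith
      have hR0 : 0 ≤ R := by linarith
      have hwl : ε ^ (l+1) ≤ 1 - R := by
        have he : ε ^ (l+1) = ε * ε ^ l := by ring
        rw [he]
        have : ε * ε ^ l ≤ ε * (1 - A) := mul_le_mul_of_nonneg_left hw hε.le
        linarith
      have hτl' : ((l+1 : ℕ) : ℝ) * ε ≤ t + ε := by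
        push_cast
        have he : ((l:ℝ) + 1) * ε = (l:ℝ) * ε + ε := by ring
        linarith
      have hfuel' : 1 ≤ (t + ε) + (n : ℝ) * ε := by
        push_cast at hfuel
        have he : ((n:ℝ) + 1) * ε = (n:ℝ) * ε + ε := by ring
        linarith
      obtain ⟨L', A', t', hL1, hA'1, hA'L, hA'mono, ht'mono, ht'1, ht'L, ht'f, hcond⟩ :=
        ih R (t + ε) (l+1) hR0 hR1 hwl hτl' s6 hfuel'
      set Aseq : ℕ → ℝ := fun i => if i ≤ 1 then A else A' (i - 1) with hAseq
      set tseq : ℕ → ℝ := fun i => if i ≤ 1 then t else t' (i - 1) with htseq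
      have hAseq1 : Aseq 1 = A := by simp [hAseq]
      have htseq1 : tseq 1 = t := by simp [htseq]
      have hAseqge : ∀ j, 2 ≤ j → Aseq j = A' (j - 1) := by
        intro j hj
        simp only [hAseq]
        rw [if_neg (by omega)]
      have htseqge : ∀ j, 2 ≤ j → tseq j = t' (j - 1) := by
        intro j hj
        simp only [htseq]
        rw [if_neg (by omega)]
      have hAseq2 : Aseq 2 = R := by rw [hAseqge 2 le_rfl]; exact hA'1
      refine ⟨L' + 1, Aseq, tseq, by omega, hAseq1, ?_, ?_, ?_, ?_, ?_, ?_, ?_⟩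
      · rw [hAseqge (L' + 1 + 1) (by omega)]
        have he : L' + 1 + 1 - 1 = L' + 1 := by omega
        rw [he, hA'L]
      · -- A strict mono
        intro i hi1 hi2
        rcases eq_or_lt_of_le hi1 with h | h
        · rw [← h, hAseq1]
          have : (1:ℕ) + 1 = 2 := rfl
          rw [this, hAseq2]
          linarith
        · rw [hAseqge i (by omega), hAseqge (i+1) (by omega)]
          have he1 : i + 1 - 1 = (i - 1) + 1 := by omega
          rw [he1]
          exact hA'mono (i - 1) (by omega) (by omega)
      · -- t strict mono
        intro i hi1 hi2
        rcases eq_or_lt_of_le hi1 with h | h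
        · rw [← h, htseq1]
          have : (1:ℕ) + 1 = 2 := rfl
          rw [this, htseqge 2 le_rfl]
          have : t' (2 - 1) = t' 1 := rfl
          rw [this]
          linarith
        · rw [htseqge i (by omega), htseqge (i+1) (by omega)]
          have he1 : i + 1 - 1 = (i - 1) + 1 := by omega
          rw [he1]
          exact ht'mono (i - 1) (by omega) (by omega)
      · rw [htseq1]; exact s3τ
      · rw [htseqge (L' + 1) (by omega)]
        have he : L' + 1 - 1 = L' := by omega
        rw [he]
        exact ht'L
      · rw [htseq1]; exact s3f
      · intro i hi1 hi2
        rcases eq_or_lt_of_le hi1 with h | h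
        · rw [← h, hAseq1, htseq1]
          have h2 : (1:ℕ) + 1 = 2 := rfl
          rw [h2, hAseq2]
          refine ⟨s1, ?_, ?_⟩
          · intro x hx1 hx2
            exact s4 x hx1 (hx2.trans s2)
          · have h8 : 0 ≤ 2 * ε * (R - A) := by positivity
            have h10 : (t + 3*ε) * (R - A) = (t + ε) * (R - A) + 2 * ε * (R - A) := by ring
            linarith
        · rw [hAseqge i (by omega), hAseqge (i+1) (by omega), htseqge i (by omega)]
          have he1 : i + 1 - 1 = (i - 1) + 1 := by omega
          rw [he1]
          exact hcond (i - 1) (by omega) (by omega)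

/-- multi-scale decomposition with only good intervals
(Lemma on non-decreasing 1-Lipschitz functions, with `ε₀ = ε^{2/ε}`). -/
theorem stmt5 :
    ∃ ε₁ : ℝ, 0 < ε₁ ∧ ∀ ε : ℝ, 0 < ε → ε < ε₁ →
      ∀ f : ℝ → ℝ, MonotoneOn f (Set.Icc 0 1) →
      (∀ x ∈ Set.Icc (0:ℝ) 1, f x ∈ Set.Icc (0:ℝ) 1) →
      (∀ x ∈ Set.Icc (0:ℝ) 1, ∀ y ∈ Set.Icc (0:ℝ) 1, |f x - f y| ≤ |x - y|) →
      ∃ (L : ℕ) (A t : ℕ → ℝ), 1 ≤ L ∧ A 1 = 0 ∧ A (L + 1) = 1 ∧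
        (∀ l, 1 ≤ l → l ≤ L → A l < A (l + 1)) ∧
        0 ≤ t 1 ∧ t L ≤ 1 ∧ (∀ l, 1 ≤ l → l < L → t l < t (l + 1)) ∧
        (∀ l, 1 ≤ l → l ≤ L →
          (ε ^ (2 / ε)) / ε ≤ A (l + 1) - A l ∧
          (∀ x, A l ≤ x → x ≤ A (l + 1) →
            f (A l) + t l * (x - A l) - ε * (A (l + 1) - A l) ≤ f x) ∧
          f (A (l + 1)) ≤ f (A l) + (t l + 3 * ε) * (A (l + 1) - A l)) ∧
        t 1 ≤ f 1 - f 0 + ε := by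
  refine ⟨1/2, by norm_num, ?_⟩
  intro ε hε hε2 f hmono hrange hlip
  obtain ⟨n, hn⟩ := exists_nat_gt (1/ε)
  have hfuel : 1 ≤ (0:ℝ) + (n:ℝ) * ε := by
    rw [div_lt_iff₀ hε] at hn
    linarith
  have hsec : ∀ x, (0:ℝ) < x → x ≤ 1 → (0:ℝ) * (x - 0) ≤ f x - f 0 := by
    intro x hx1 hx2
    have := hmono (show (0:ℝ) ∈ Icc (0:ℝ) 1 by constructor <;> norm_num)
      ⟨hx1.le, hx2⟩ hx1.le
    linarith
  obtain ⟨L, Aseq, tseq, hL, h1, h2, h3, h4, h5, h6, h7, h8⟩ :=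
    recdec hε (by linarith) hmono hlip n 0 0 0 le_rfl (by norm_num) (by norm_num)
      (by norm_num) hsec hfuel
  refine ⟨L, Aseq, tseq, hL, h1, h2, h3, h5, h6, h4, h8, ?_⟩
  have he : tseq 1 * (1 - 0) = tseq 1 := by ring
  rw [he] at h7
  linarith
end

section
/- (Train-track counterexample without direction non-concentration.) For s = 1/2 there is a collection T of ~δ^{-1} δ-tubes which is a (δ,1)-set (as a subset of the space of lines), consisting of δ^{-1/2} bushes of δ^{-1/2} tubes each, where the i-th bush passes through a δ × δ^{1/2} horizontal rectangle U_i, with consecutive rectangles vertically separated by δ^{1/2}; every δ-square inside some U_i lies in P_{~δ^{-1/2}}(T), and there are ~δ^{-1} such squares, so |P_{r}(T)| ≳ δ^{-1} with r ~ δ^{-1/2}, which violates the bound |P_r(T)| ≲ δ^{-υ}|T|²/r³ ~ δ^{-1/2−υ}. The direction set of T consists of δ^{-1/2} consecutive δ-arcs and hence is not a (δ,1/2)-set. -/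
/-!
Let `n ≈ δ^{-1/2}/2`. Tube `(j, i) ∈ [0, n)²` has direction `θ_j = arcsin (2jδ)` and core line
through `(0, i n δ)`, so its dual point is `(θ_j, cos θ_j · i n δ)`. For `0 ≤ x ≤ nδ` the point
`(x, i n δ)` is at distance `2jδ · x ≤ δ/2` from the core line of tube `(j, i)`, hence each of the
`n² ≈ δ⁻¹` squares `(m, i n)`, `m < n`, meets all `n` tubes of bush `i`.
The dual points lie within `δ` of the grid `{θ_j} × {i n δ}`, whose spacing is `≥ 2δ` horizontally
and `nδ` vertically, so a ball of radius `r ≥ δ` meets at most `r/δ + 1` of the `n` columns and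
`4r/(nδ) + 1` points of each column: at most `n · 4r/(nδ) + r/δ + 1 ≤ 6r/δ ≲ r n²` points.
-/

open Set

noncomputable section

def sqIdx (δ : ℝ) (q : ℤ × ℤ) : Set (ℝ × ℝ) :=
  Set.Ico ((q.1 : ℝ) * δ) (((q.1 : ℝ) + 1) * δ) ×ˢ
    Set.Ico ((q.2 : ℝ) * δ) (((q.2 : ℝ) + 1) * δ)

def inBox (δ : ℝ) (q : ℤ × ℤ) : Prop :=
  0 ≤ q.1 ∧ 0 ≤ q.2 ∧ (q.1 : ℝ) * δ ≤ 1 ∧ (q.2 : ℝ) * δ ≤ 1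

/-- The δ-tube in direction θ with offset b (a δ-neighborhood of a line segment in the
unit square, the line having direction (cos θ, sin θ)). -/
def tube (δ θ b : ℝ) : Set (ℝ × ℝ) :=
  {p : ℝ × ℝ | |(-Real.sin θ) * p.1 + Real.cos θ * p.2 - b| ≤ δ ∧
    p.1 ∈ Set.Icc (0:ℝ) 1 ∧ p.2 ∈ Set.Icc (0:ℝ) 1}

/-- Number of tubes of the collection 𝒯 meeting the δ-square indexed by q. -/
def tubeCount (𝒯 : Set (Set (ℝ × ℝ))) (δ : ℝ) (q : ℤ × ℤ) : ℕ :=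
  {t | t ∈ 𝒯 ∧ (t ∩ sqIdx δ q).Nonempty}.ncard

/-- δ-squares of the unit square meeting ~r tubes of 𝒯 (between r and 2r). -/
def richSquares (𝒯 : Set (Set (ℝ × ℝ))) (δ r : ℝ) : Set (ℤ × ℤ) :=
  {q | inBox δ q ∧ r ≤ (tubeCount 𝒯 δ q : ℝ) ∧ (tubeCount 𝒯 δ q : ℝ) ≤ 2 * r}

/-- δ-squares of the unit square meeting at least r tubes of 𝒯. -/
def richSquaresGe (𝒯 : Set (Set (ℝ × ℝ))) (δ r : ℝ) : Set (ℤ × ℤ) :=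
  {q | inBox δ q ∧ r ≤ (tubeCount 𝒯 δ q : ℝ)}

end

open Real

theorem card_filter_abs_sub_le_of_separated {s : Finset ℕ} {g : ℕ → ℝ} {ε r : ℝ} (hε : 0 < ε)
    (hr : 0 ≤ r) (hg : ∀ a ∈ s, ∀ b ∈ s, a ≤ b → ε * ((b : ℝ) - a) ≤ g b - g a) (x : ℝ) :
    ((s.filter fun k => |g k - x| ≤ r).card : ℝ) ≤ 2 * r / ε + 1 := by
  set S := s.filter fun k => |g k - x| ≤ r
  rcases S.eq_empty_or_nonempty with hS | hS
  · rw [hS, Finset.card_empty, Nat.cast_zero]; positivity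
  set m := S.min' hS
  set M := S.max' hS
  obtain ⟨hm, hmx⟩ := Finset.mem_filter.1 (S.min'_mem hS)
  obtain ⟨hM, hMx⟩ := Finset.mem_filter.1 (S.max'_mem hS)
  have hmM : m ≤ M := S.min'_le _ (S.max'_mem hS)
  have hcard : S.card ≤ M + 1 - m := by
    simpa using Finset.card_le_card fun k hk =>
      Finset.mem_Icc.2 ⟨S.min'_le k hk, S.le_max' k hk⟩
  have hcard' : (S.card : ℝ) ≤ M - m + 1 := by
    have := (Nat.cast_le (α := ℝ)).2 hcard
    rwa [Nat.cast_sub (by omega), Nat.cast_add, Nat.cast_one, add_sub_right_comm] at this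
  have hspread : (M : ℝ) - m ≤ 2 * r / ε := by
    rw [le_div_iff₀ hε, mul_comm]
    linarith [hg m hm M hM hmM, (abs_le.1 hmx).1, (abs_le.1 hMx).2]
  linarith

theorem finite_richSquaresGe (𝒯 : Set (Set (ℝ × ℝ))) {δ : ℝ} (hδ : 0 < δ) (r : ℝ) :
    (richSquaresGe 𝒯 δ r).Finite := by
  have hle : ∀ z : ℤ, (z : ℝ) * δ ≤ 1 → z ≤ ⌊δ⁻¹⌋ := fun z hz =>
    Int.le_floor.2 (by rwa [← one_div, le_div_iff₀ hδ])
  refine (Set.finite_Icc ((0, 0) : ℤ × ℤ) (⌊δ⁻¹⌋, ⌊δ⁻¹⌋)).subset ?_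
  rintro q ⟨⟨h₁, h₂, h₃, h₄⟩, -⟩
  exact ⟨⟨h₁, h₂⟩, hle _ h₃, hle _ h₄⟩

abbrev tubes (δ : ℝ) (D : Set (ℝ × ℝ)) : Set (Set (ℝ × ℝ)) :=
  {tb | ∃ p ∈ D, tb = tube δ p.1 p.2}

theorem Set.Finite.tubes {D : Set (ℝ × ℝ)} (hD : D.Finite) (δ : ℝ) : (tubes δ D).Finite := by
  refine (hD.image fun p => tube δ p.1 p.2).subset ?_
  rintro _ ⟨p, hp, rfl⟩
  exact ⟨p, hp, rfl⟩

namespace TrainTrack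

noncomputable def dir (δ : ℝ) (j : ℕ) : ℝ := arcsin (2 * j * δ)

def height (n : ℕ) (δ : ℝ) (i : ℕ) : ℝ := i * n * δ

noncomputable def point (n : ℕ) (δ : ℝ) (p : ℕ × ℕ) : ℝ × ℝ :=
  (dir δ p.1, cos (dir δ p.1) * height n δ p.2)

variable {n : ℕ} {δ : ℝ}

theorem two_mul_mul_le (hδ₁ : δ ≤ 1 / 16) (hn : 4 * n ^ 2 * δ ≤ 1) : 2 * n * δ ≤ 1 / 4 := by
  nlinarith

theorem sin_dir (hδ : 0 ≤ δ) (hδ₁ : δ ≤ 1 / 16) (hn : 4 * n ^ 2 * δ ≤ 1) {j : ℕ} (hj : j ≤ n) :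
    sin (dir δ j) = 2 * j * δ := by
  have : (j : ℝ) * δ ≤ n * δ := by gcongr
  exact sin_arcsin (by linarith [mul_nonneg (Nat.cast_nonneg j) hδ])
    (by linarith [two_mul_mul_le hδ₁ hn])

theorem dir_nonneg (hδ : 0 ≤ δ) (j : ℕ) : 0 ≤ dir δ j :=
  arcsin_nonneg.2 (by positivity)

theorem dir_monotone (hδ : 0 ≤ δ) : Monotone (dir δ) := fun _ _ hab =>
  monotone_arcsin (mul_le_mul_of_nonneg_right (by gcongr) hδ)

theorem dir_le (hδ : 0 ≤ δ) (hδ₁ : δ ≤ 1 / 16) (hn : 4 * n ^ 2 * δ ≤ 1) {j : ℕ} (hj : j ≤ n) :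
    dir δ j ≤ 4 * n * δ := by
  have hsin := mul_le_sin (dir_nonneg hδ j) (arcsin_le_pi_div_two _)
  rw [sin_dir hδ hδ₁ hn hj, div_mul_eq_mul_div, div_le_iff₀ pi_pos] at hsin
  have : (j : ℝ) * δ ≤ n * δ := by gcongr
  nlinarith [pi_le_four, mul_nonneg (Nat.cast_nonneg j) hδ]

theorem one_sub_cos_dir_le (hδ : 0 ≤ δ) (hδ₁ : δ ≤ 1 / 16) (hn : 4 * n ^ 2 * δ ≤ 1) {j : ℕ}
    (hj : j ≤ n) : 1 - cos (dir δ j) ≤ 2 * δ := by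
  have := dir_le hδ hδ₁ hn hj
  nlinarith [one_sub_sq_div_two_le_cos (x := dir δ j), dir_nonneg hδ j]

theorem cos_dir_antitone (hδ : 0 ≤ δ) : Antitone fun j => cos (dir δ j) := fun a _ hab =>
  cos_le_cos_of_nonneg_of_le_pi (dir_nonneg hδ a)
    ((arcsin_le_pi_div_two _).trans (by linarith [pi_pos])) (dir_monotone hδ hab)

theorem mul_sub_le_dir_sub (hδ : 0 ≤ δ) (hδ₁ : δ ≤ 1 / 16) (hn : 4 * n ^ 2 * δ ≤ 1) {a b : ℕ}
    (hab : a ≤ b) (hb : b ≤ n) : 2 * δ * ((b : ℝ) - a) ≤ dir δ b - dir δ a := by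
  have h := abs_sin_sub_sin_le (dir δ b) (dir δ a)
  rw [sin_dir hδ hδ₁ hn hb, sin_dir hδ hδ₁ hn (hab.trans hb),
    abs_of_nonneg (sub_nonneg.2 (dir_monotone hδ hab))] at h
  linarith [le_abs_self (2 * (b : ℝ) * δ - 2 * a * δ)]

theorem eq_of_dir_eq (hδ : 0 < δ) (hδ₁ : δ ≤ 1 / 16) (hn : 4 * n ^ 2 * δ ≤ 1) {a b : ℕ}
    (ha : a ≤ n) (hb : b ≤ n) (h : dir δ a = dir δ b) : a = b := by
  have := congrArg sin h
  rw [sin_dir hδ.le hδ₁ hn ha, sin_dir hδ.le hδ₁ hn hb] at this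
  have : (a : ℝ) * δ = b * δ := by linarith
  exact_mod_cast mul_right_cancel₀ hδ.ne' this

theorem height_nonneg (hδ : 0 ≤ δ) (i : ℕ) : 0 ≤ height n δ i := by
  unfold height; positivity

theorem height_le (hδ : 0 ≤ δ) (hn : 4 * n ^ 2 * δ ≤ 1) {i : ℕ} (hi : i ≤ n) :
    height n δ i ≤ 1 / 4 := by
  have : (i : ℝ) * n * δ ≤ n * n * δ := by gcongr
  unfold height; nlinarith

theorem mem_tube_point (hδ : 0 ≤ δ) (hδ₁ : δ ≤ 1 / 16) (hn : 4 * n ^ 2 * δ ≤ 1) {j i m : ℕ}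
    (hj : j ≤ n) (hi : i ≤ n) (hm : m ≤ n) :
    ((m : ℝ) * δ, height n δ i) ∈ tube δ (point n δ (j, i)).1 (point n δ (j, i)).2 := by
  have hmδ : (m : ℝ) * δ ≤ n * δ := by gcongr
  have hjm : (j : ℝ) * m * δ ≤ n * n * δ := by gcongr
  have h2n := two_mul_mul_le hδ₁ hn
  refine ⟨?_, ⟨by positivity, by linarith⟩, height_nonneg hδ i, by linarith [height_le hδ hn hi]⟩
  rw [point, sin_dir hδ hδ₁ hn hj]
  rw [show -(2 * (j : ℝ) * δ) * (m * δ) + cos (dir δ j) * height n δ i -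
      cos (dir δ j) * height n δ i = -(2 * (j * m * δ) * δ) by ring, abs_neg,
    abs_of_nonneg (by positivity)]
  nlinarith

theorem tube_point_ne (hδ : 0 < δ) (hδ₁ : δ ≤ 1 / 16) (hn : 4 * n ^ 2 * δ ≤ 1) {a b i : ℕ}
    (hab : a < b) (hb : b ≤ n) (hi : i ≤ n) :
    tube δ (point n δ (a, i)).1 (point n δ (a, i)).2 ≠
      tube δ (point n δ (b, i)).1 (point n δ (b, i)).2 := by
  -- `(1, h + 2bδ / cb)` is on the core line of tube `b`; as `ca ≥ cb`, it is `2δ` off that of `a`.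
  simp only [point]
  set ca := cos (dir δ a)
  set cb := cos (dir δ b)
  set h := height n δ i
  have hcb : 7 / 8 ≤ cb := by linarith [one_sub_cos_dir_le hδ.le hδ₁ hn hb]
  have hcab : cb ≤ ca := cos_dir_antitone hδ.le hab.le
  have hbδ : (b : ℝ) * δ ≤ n * δ := by gcongr
  have hshift : 2 * b * δ / cb ≤ 2 / 7 := by
    rw [div_le_iff₀ (by linarith)]; nlinarith [two_mul_mul_le hδ₁ hn]
  have hshift₀ : 0 ≤ 2 * b * δ / cb := by positivity
  have hmem : ((1 : ℝ), h + 2 * b * δ / cb) ∈ tube δ (dir δ b) (cb * h) := by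
    refine ⟨?_, ⟨zero_le_one, le_rfl⟩, by linarith [height_nonneg hδ.le i (n := n)],
      by linarith [height_le hδ.le hn hi]⟩
    rw [sin_dir hδ.le hδ₁ hn hb, show -(2 * (b : ℝ) * δ) * 1 + cb * (h + 2 * b * δ / cb) - cb * h
      = 0 by field_simp; ring, abs_zero]
    exact hδ.le
  have hnmem : ((1 : ℝ), h + 2 * b * δ / cb) ∉ tube δ (dir δ a) (ca * h) := by
    rintro ⟨habs, -⟩
    rw [sin_dir hδ.le hδ₁ hn (hab.le.trans hb)] at habs
    have hgap : 2 * b * δ ≤ ca * (2 * b * δ / cb) := by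
      rw [mul_div_assoc', le_div_iff₀ (by linarith)]
      nlinarith [mul_le_mul_of_nonneg_left hcab (by positivity : (0 : ℝ) ≤ 2 * b * δ)]
    have hba : (a : ℝ) + 1 ≤ b := by exact_mod_cast hab
    have := le_abs_self (-(2 * (a : ℝ) * δ) * 1 + ca * (h + 2 * b * δ / cb) - ca * h)
    nlinarith
  exact fun heq => hnmem (heq ▸ hmem)

end TrainTrack

open TrainTrack

noncomputable def trainTrack (n : ℕ) (δ : ℝ) : Set (ℝ × ℝ) :=
  point n δ '' ↑(Finset.range n ×ˢ Finset.range n)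

variable {n : ℕ} {δ : ℝ}

theorem trainTrack_finite : (trainTrack n δ).Finite :=
  (Finset.finite_toSet _).image _

theorem le_tubeCount_trainTrack (hδ : 0 < δ) (hδ₁ : δ ≤ 1 / 16) (hn : 4 * n ^ 2 * δ ≤ 1)
    {m i : ℕ} (hm : m ≤ n) (hi : i < n) :
    n ≤ tubeCount (tubes δ (trainTrack n δ)) δ ((m : ℤ), (i : ℤ) * n) := by
  have hsq : ((m : ℝ) * δ, height n δ i) ∈ sqIdx δ ((m : ℤ), (i : ℤ) * n) := by
    simp only [sqIdx, height, Set.mem_prod, Set.mem_Ico]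
    push_cast
    exact ⟨⟨le_rfl, by nlinarith⟩, ⟨le_rfl, by nlinarith⟩⟩
  refine Set.le_ncard_of_inj_on_range (fun j => tube δ (point n δ (j, i)).1 (point n δ (j, i)).2)
    (fun j hj => ⟨⟨point n δ (j, i), ⟨(j, i), by simpa using ⟨hj, hi⟩, rfl⟩, rfl⟩,
      _, mem_tube_point hδ.le hδ₁ hn hj.le hi.le hm, hsq⟩) (fun a ha b hb hab => ?_)
    ((trainTrack_finite.tubes δ).subset fun _ ht => ht.1)
  rcases lt_trichotomy a b with h | rfl | h
  · exact absurd hab (tube_point_ne hδ hδ₁ hn h hb.le hi.le)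
  · rfl
  · exact absurd hab.symm (tube_point_ne hδ hδ₁ hn h ha.le hi.le)

theorem point_injOn (hδ : 0 < δ) (hδ₁ : δ ≤ 1 / 16) (hn : 4 * n ^ 2 * δ ≤ 1) :
    Set.InjOn (point n δ) ↑(Finset.range n ×ˢ Finset.range n) := by
  rintro ⟨j, i⟩ hp ⟨j', i'⟩ hq h
  simp only [Finset.coe_product, Finset.coe_range, Set.mem_prod, Set.mem_Iio] at hp hq
  obtain ⟨hdir, hcos⟩ := Prod.ext_iff.1 h
  have hj : j = j' := eq_of_dir_eq hδ hδ₁ hn hp.1.le hq.1.le hdir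
  subst hj
  have hc : cos (dir δ j) ≠ 0 := by linarith [one_sub_cos_dir_le hδ.le hδ₁ hn hp.1.le]
  have hn₀ : (0 : ℝ) < n := by exact_mod_cast (show 0 < n by omega)
  have : (i : ℝ) * (n * δ) = i' * (n * δ) := by
    simpa [point, height, hc, mul_assoc] using hcos
  have : (i : ℝ) = i' := mul_right_cancel₀ (mul_pos hn₀ hδ).ne' this
  exact Prod.ext rfl (by exact_mod_cast this)

theorem ncard_trainTrack (hδ : 0 < δ) (hδ₁ : δ ≤ 1 / 16) (hn : 4 * n ^ 2 * δ ≤ 1) :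
    (trainTrack n δ).ncard = n ^ 2 := by
  rw [trainTrack, (point_injOn hδ hδ₁ hn).ncard_image, Set.ncard_coe_finset,
    Finset.card_product, Finset.card_range, sq]

theorem dirs_trainTrack : {θ | ∃ b, (θ, b) ∈ trainTrack n δ} = dir δ '' ↑(Finset.range n) := by
  ext θ
  simp only [trainTrack, Set.mem_ofPred_eq, Set.mem_image, Finset.coe_product, Finset.coe_range,
    Set.mem_prod, Set.mem_Iio, Prod.exists, point, Prod.mk.injEq]
  constructor
  · rintro ⟨_, j, _, ⟨hj, -⟩, rfl, -⟩
    exact ⟨j, hj, rfl⟩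
  · rintro ⟨j, hj, rfl⟩
    exact ⟨_, j, 0, ⟨hj, by omega⟩, rfl, rfl⟩

theorem ncard_dirs_trainTrack (hδ : 0 < δ) (hδ₁ : δ ≤ 1 / 16) (hn : 4 * n ^ 2 * δ ≤ 1) :
    {θ | ∃ b, (θ, b) ∈ trainTrack n δ}.ncard = n := by
  have hinj : Set.InjOn (dir δ) ↑(Finset.range n) := fun a ha b hb =>
    eq_of_dir_eq hδ hδ₁ hn (Finset.mem_range.1 ha).le (Finset.mem_range.1 hb).le
  rw [dirs_trainTrack, hinj.ncard_image, Set.ncard_coe_finset, Finset.card_range]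

theorem fst_mem_Icc_of_mem_trainTrack (hδ : 0 ≤ δ) (hδ₁ : δ ≤ 1 / 16) (hn : 4 * n ^ 2 * δ ≤ 1)
    {p : ℝ × ℝ} (hp : p ∈ trainTrack n δ) : p.1 ∈ Set.Icc 0 (4 * n * δ) := by
  obtain ⟨⟨j, i⟩, hji, rfl⟩ := hp
  simp only [Finset.coe_product, Finset.coe_range, Set.mem_prod, Set.mem_Iio] at hji
  exact ⟨dir_nonneg hδ j, dir_le hδ hδ₁ hn hji.1.le⟩

theorem ncard_trainTrack_inter_closedBall_le (hδ : 0 < δ) (hδ₁ : δ ≤ 1 / 16)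
    (hn : 4 * n ^ 2 * δ ≤ 1) (x : ℝ × ℝ) {r : ℝ} (hr : δ ≤ r) :
    ((trainTrack n δ ∩ Metric.closedBall x r).ncard : ℝ) ≤ 6 * r / δ := by
  have hr₀ : 0 ≤ r := hδ.le.trans hr
  rcases Nat.eq_zero_or_pos n with rfl | hn₀
  · simp only [trainTrack, Finset.range_zero, Finset.empty_product, Finset.coe_empty,
      Set.image_empty, Set.empty_inter, Set.ncard_empty, Nat.cast_zero]
    positivity
  set Sθ := (Finset.range n).filter fun j => |dir δ j - x.1| ≤ r
  set Sy := (Finset.range n).filter fun i => |height n δ i - x.2| ≤ 2 * r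
  have hsub : trainTrack n δ ∩ Metric.closedBall x r ⊆ point n δ '' ↑(Sθ ×ˢ Sy) := by
    rintro _ ⟨⟨⟨j, i⟩, hp, rfl⟩, hball⟩
    simp only [Finset.coe_product, Finset.coe_range, Set.mem_prod, Set.mem_Iio] at hp
    rw [Metric.mem_closedBall, Prod.dist_eq, max_le_iff, Real.dist_eq, Real.dist_eq] at hball
    refine ⟨(j, i), Finset.mem_product.2 ⟨Finset.mem_filter.2 ⟨Finset.mem_range.2 hp.1, hball.1⟩,
      Finset.mem_filter.2 ⟨Finset.mem_range.2 hp.2, ?_⟩⟩, rfl⟩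
    have hcos := one_sub_cos_dir_le hδ.le hδ₁ hn hp.1.le
    have hh := height_le hδ.le hn hp.2.le
    have hh₀ := height_nonneg hδ.le i (n := n)
    calc |height n δ i - x.2|
        = |(cos (dir δ j) * height n δ i - x.2) + (1 - cos (dir δ j)) * height n δ i| := by
          ring_nf
      _ ≤ |cos (dir δ j) * height n δ i - x.2| + |(1 - cos (dir δ j)) * height n δ i| :=
          abs_add_le _ _
      _ ≤ r + r := by
          gcongr
          · exact hball.2
          · rw [abs_of_nonneg (mul_nonneg (by linarith [cos_le_one (dir δ j)]) hh₀)]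
            nlinarith
      _ = 2 * r := by ring
  have hSθ : (Sθ.card : ℝ) ≤ r / δ + 1 := by
    have := card_filter_abs_sub_le_of_separated (s := Finset.range n) (by positivity : 0 < 2 * δ)
      hr₀ (fun a _ b hb hab => mul_sub_le_dir_sub hδ.le hδ₁ hn hab (Finset.mem_range.1 hb).le) x.1
    rwa [mul_div_mul_left _ _ two_ne_zero] at this
  have hSθn : (Sθ.card : ℝ) ≤ n := by
    exact_mod_cast (Finset.card_filter_le _ _).trans (Finset.card_range n).le
  have hSy : (Sy.card : ℝ) ≤ 4 * r / (n * δ) + 1 := by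
    have := card_filter_abs_sub_le_of_separated (s := Finset.range n) (g := height n δ)
      (by positivity : (0 : ℝ) < n * δ) (by positivity : 0 ≤ 2 * r)
      (fun a _ b _ _ => by simp only [height]; ring_nf; rfl) x.2
    rwa [← mul_assoc, show (2 : ℝ) * 2 = 4 by norm_num] at this
  have hrδ : 1 ≤ r / δ := by rwa [le_div_iff₀ hδ, one_mul]
  calc ((trainTrack n δ ∩ Metric.closedBall x r).ncard : ℝ)
      ≤ (Sθ ×ˢ Sy).card := by
        exact_mod_cast (Set.ncard_le_ncard hsub ((Finset.finite_toSet _).image _)).trans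
          (Set.ncard_image_le (Finset.finite_toSet _) |>.trans (Set.ncard_coe_finset _).le)
    _ = Sθ.card * Sy.card := by rw [Finset.card_product, Nat.cast_mul]
    _ ≤ n * (4 * r / (n * δ)) + (r / δ + 1) := by
        nlinarith [mul_le_mul_of_nonneg_left hSy (Nat.cast_nonneg Sθ.card),
          mul_le_mul_of_nonneg_right hSθn (by positivity : 0 ≤ 4 * r / (n * δ))]
    _ ≤ 6 * r / δ := by
        rw [mul_div_assoc', mul_div_mul_comm, div_self (by positivity), one_mul, mul_div_assoc,
          mul_div_assoc]
        linarith

theorem sq_le_ncard_richSquaresGe_trainTrack (hδ : 0 < δ) (hδ₁ : δ ≤ 1 / 16)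
    (hn : 4 * n ^ 2 * δ ≤ 1) : n ^ 2 ≤ (richSquaresGe (tubes δ (trainTrack n δ)) δ n).ncard := by
  have hnδ := two_mul_mul_le hδ₁ hn
  calc n ^ 2 = (↑(Finset.range n ×ˢ Finset.range n) : Set (ℕ × ℕ)).ncard := by
        rw [Set.ncard_coe_finset, Finset.card_product, Finset.card_range, sq]
    _ ≤ _ := by
      refine Set.ncard_le_ncard_of_injOn (fun p => ((p.1 : ℤ), (p.2 : ℤ) * n)) ?_ ?_
        (finite_richSquaresGe _ hδ _)
      · rintro ⟨m, i⟩ hp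
        simp only [Finset.coe_product, Finset.coe_range, Set.mem_prod, Set.mem_Iio] at hp
        have hm : (m : ℝ) * δ ≤ n * δ := by gcongr; exact_mod_cast hp.1.le
        refine ⟨⟨by positivity, by positivity, by push_cast; linarith, ?_⟩, ?_⟩
        · push_cast
          linarith [height_le hδ.le hn hp.2.le (n := n), show height n δ i = i * n * δ from rfl]
        · exact_mod_cast le_tubeCount_trainTrack hδ hδ₁ hn hp.1.le hp.2
      · rintro ⟨m, i⟩ hp ⟨m', i'⟩ - h
        simp only [Finset.coe_product, Finset.coe_range, Set.mem_prod, Set.mem_Iio] at hp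
        simp only [Prod.mk.injEq, Nat.cast_inj] at h
        have hn₀ : (n : ℤ) ≠ 0 := by exact_mod_cast (show n ≠ 0 by omega)
        exact Prod.ext h.1 (by exact_mod_cast mul_right_cancel₀ hn₀ h.2)

theorem exists_nat_two_mul_le_inv_le_four_mul {s : ℝ} (hs : 0 < s) (hs₄ : s ≤ 1 / 4) :
    ∃ n : ℕ, 2 * n ≤ s⁻¹ ∧ s⁻¹ ≤ 4 * n := by
  have : 4 ≤ s⁻¹ := by rwa [le_inv_comm₀ (by norm_num) hs, ← one_div]
  refine ⟨⌊s⁻¹ / 2⌋₊, by linarith [Nat.floor_le (by positivity : 0 ≤ s⁻¹ / 2)], ?_⟩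
  linarith [Nat.lt_floor_add_one (s⁻¹ / 2)]

/-- the train-track counterexample at s = 1/2: a (δ,1)-set of ~δ^{-1} tubes
whose direction set lies in an interval of length ~δ^{1/2}, with ~δ^{-1} squares that are
~δ^{-1/2}-rich, violating the Szemerédi–Trotter tube bound. -/
theorem stmt17 :
    ∃ C : ℝ, 1 ≤ C ∧ ∃ δ₀ : ℝ, 0 < δ₀ ∧ ∀ δ : ℝ, 0 < δ → δ < δ₀ →
      ∃ D : Set (ℝ × ℝ), D.Finite ∧
        δ⁻¹ / C ≤ (D.ncard : ℝ) ∧ (D.ncard : ℝ) ≤ C * δ⁻¹ ∧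
        (∀ (x : ℝ × ℝ) (r : ℝ), δ ≤ r → r ≤ 1 →
          ((D ∩ Metric.closedBall x r).ncard : ℝ) ≤ C * r * (D.ncard : ℝ)) ∧
        (∃ θ₀ : ℝ, ∀ p ∈ D, θ₀ ≤ p.1 ∧ p.1 ≤ θ₀ + C * δ ^ ((1:ℝ)/2)) ∧
        δ ^ (-(1:ℝ)/2) / C ≤ (({θ | ∃ b, (θ, b) ∈ D} : Set ℝ).ncard : ℝ) ∧
        ∃ r : ℝ, δ ^ (-(1:ℝ)/2) / C ≤ r ∧ r ≤ C * δ ^ (-(1:ℝ)/2) ∧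
          δ⁻¹ / C ≤
            ((richSquaresGe {tb | ∃ p ∈ D, tb = tube δ p.1 p.2} δ r).ncard : ℝ) ∧
          δ ^ (-(1:ℝ)/2) * ((D.ncard : ℝ)) ^ 2 / (C * r ^ 3) ≤
            ((richSquaresGe {tb | ∃ p ∈ D, tb = tube δ p.1 p.2} δ r).ncard : ℝ) := by
  refine ⟨100, by norm_num, 1 / 16, by norm_num, fun δ hδ hδ₁ => ?_⟩
  obtain ⟨s, hs, rfl⟩ : ∃ s : ℝ, 0 < s ∧ δ = s ^ 2 := ⟨√δ, sqrt_pos.2 hδ, (sq_sqrt hδ.le).symm⟩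
  have hhalf : (s ^ 2) ^ ((1 : ℝ) / 2) = s := by rw [← sqrt_eq_rpow, sqrt_sq hs.le]
  have hneg : (s ^ 2) ^ (-(1 : ℝ) / 2) = s⁻¹ := by rw [neg_div, rpow_neg (by positivity), hhalf]
  obtain ⟨n, hn₂, hn₄⟩ := exists_nat_two_mul_le_inv_le_four_mul hs (by nlinarith)
  have hns : 2 * n * s ≤ 1 := by
    have := mul_le_mul_of_nonneg_right hn₂ hs.le
    rwa [inv_mul_cancel₀ hs.ne'] at this
  have hn : 4 * n ^ 2 * s ^ 2 ≤ 1 := by nlinarith [mul_nonneg (Nat.cast_nonneg n) hs.le]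
  have hδinv : (s ^ 2)⁻¹ = s⁻¹ ^ 2 := (inv_pow s 2).symm
  have hD : ((trainTrack n (s ^ 2)).ncard : ℝ) = n ^ 2 := by
    exact_mod_cast ncard_trainTrack (by positivity) hδ₁.le hn
  have hrich :
      (n : ℝ) ^ 2 ≤ (richSquaresGe (tubes (s ^ 2) (trainTrack n (s ^ 2))) (s ^ 2) n).ncard := by
    exact_mod_cast sq_le_ncard_richSquaresGe_trainTrack (by positivity) hδ₁.le hn
  have hn₀ : (0 : ℝ) < n := by linarith [inv_pos.2 hs]
  have hsn : s⁻¹ ^ 2 ≤ 16 * n ^ 2 := by nlinarith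
  rw [hhalf, hneg, hδinv]
  refine ⟨trainTrack n (s ^ 2), trainTrack_finite, by rw [hD]; nlinarith, by rw [hD]; nlinarith,
    fun x r hr _ => ?_, ⟨0, fun p hp => ?_⟩, ?_, n, by linarith, by linarith, by nlinarith, ?_⟩
  · calc _ ≤ 6 * r / s ^ 2 := ncard_trainTrack_inter_closedBall_le (by positivity) hδ₁.le hn x hr
      _ = 6 * r * s⁻¹ ^ 2 := by rw [div_eq_mul_inv, hδinv]
      _ ≤ 100 * r * _ := by
        rw [hD]; nlinarith [mul_le_mul_of_nonneg_left hsn (hδ.le.trans hr)]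
  · obtain ⟨h₀, h₁⟩ := fst_mem_Icc_of_mem_trainTrack (by positivity) hδ₁.le hn hp
    constructor <;> nlinarith
  · rw [ncard_dirs_trainTrack (by positivity) hδ₁.le hn]; linarith
  · rw [hD, div_le_iff₀ (by positivity)]
    nlinarith [mul_le_mul_of_nonneg_right hrich (by positivity : (0 : ℝ) ≤ 100 * n ^ 3),
      mul_le_mul_of_nonneg_right hn₄ (by positivity : (0 : ℝ) ≤ n ^ 4)]
end

section
/- (Bootstrapping inequality implies polynomial-rate decay.) Let ST : (0,1] → [1,∞) be a function of the scale δ and suppose there exist families of constants C_ε, d_ε > 0, e_ε ≥ 0 with e_ε → 0 as ε → 0, such that for every ε > 0 and every δ ∈ (0,1]: ST(δ) ≤ C_ε · max{ (δ̃/δ)^{e_ε} ST(δ̃) : δ̃ ∈ [δ^{1−d_ε}·c, 1] } for some constant c > 0, and suppose ST(δ) ≤ δ^{-2} trivially. Then for every υ > 0 there is C_υ with ST(δ) ≤ C_υ δ^{-υ} for all δ ∈ (0,1]. -/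
open Set Filter

private lemma bound_mono (ST : ℝ → ℝ) {a b : ℝ} (hab : a ≤ b)
    (h : ∃ Ca : ℝ, 0 < Ca ∧ ∀ δ : ℝ, 0 < δ → δ ≤ 1 → ST δ ≤ Ca * δ ^ (-a)) :
    ∃ Cb : ℝ, 0 < Cb ∧ ∀ δ : ℝ, 0 < δ → δ ≤ 1 → ST δ ≤ Cb * δ ^ (-b) := by
  obtain ⟨Ca, hCa, hbd⟩ := h
  refine ⟨Ca, hCa, fun δ hδ hδ1 => (hbd δ hδ hδ1).trans ?_⟩
  have := Real.rpow_le_rpow_of_exponent_ge hδ hδ1 (neg_le_neg hab)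
  nlinarith

/-- a bootstrapping inequality with self-improving losses implies that
ST(δ) decays faster than any fixed negative power of δ. -/
theorem stmt19 (ST : ℝ → ℝ) (hST1 : ∀ δ : ℝ, 0 < δ → δ ≤ 1 → 1 ≤ ST δ)
    (hSTtriv : ∀ δ : ℝ, 0 < δ → δ ≤ 1 → ST δ ≤ δ ^ (-(2:ℝ)))
    (c : ℝ) (hc : 0 < c)
    (C d e : ℝ → ℝ) (hC : ∀ ε : ℝ, 0 < ε → 0 < C ε) (hd : ∀ ε : ℝ, 0 < ε → 0 < d ε)
    (he : ∀ ε : ℝ, 0 < ε → 0 ≤ e ε)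
    (he0 : Tendsto e (nhdsWithin 0 (Set.Ioi 0)) (nhds 0))
    (hrec : ∀ ε : ℝ, 0 < ε → ∀ δ : ℝ, 0 < δ → δ ≤ 1 →
      ∃ δ' : ℝ, 0 < δ' ∧ δ ^ (1 - d ε) * c ≤ δ' ∧ δ' ≤ 1 ∧
        ST δ ≤ C ε * (δ' / δ) ^ (e ε) * ST δ') :
    ∀ υ : ℝ, 0 < υ → ∃ Cυ : ℝ, 0 < Cυ ∧ ∀ δ : ℝ, 0 < δ → δ ≤ 1 →
      ST δ ≤ Cυ * δ ^ (-υ) := by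
  set S : Set ℝ := {υ | 0 < υ ∧ ∃ Cυ : ℝ, 0 < Cυ ∧ ∀ δ : ℝ, 0 < δ → δ ≤ 1 →
      ST δ ≤ Cυ * δ ^ (-υ)} with hS
  have h2S : (2 : ℝ) ∈ S := by
    refine ⟨two_pos, 1, one_pos, fun δ hδ hδ1 => ?_⟩
    simpa using hSTtriv δ hδ hδ1
  have hne : S.Nonempty := ⟨2, h2S⟩
  have hbdd : BddBelow S := ⟨0, fun x hx => hx.1.le⟩
  set υ₀ := sInf S with hυ₀
  have hυ₀0 : 0 ≤ υ₀ := le_csInf hne (fun x hx => hx.1.le)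
  -- key: anything above υ₀ gives a bound
  have habove : ∀ υ : ℝ, υ₀ < υ → ∃ Cυ : ℝ, 0 < Cυ ∧ ∀ δ : ℝ, 0 < δ → δ ≤ 1 →
      ST δ ≤ Cυ * δ ^ (-υ) := by
    intro υ hυ
    obtain ⟨a, haS, hav⟩ := exists_lt_of_csInf_lt hne hυ
    exact bound_mono ST hav.le haS.2
  have hυ₀eq : υ₀ = 0 := by
    by_contra h0
    have hυ₀pos : 0 < υ₀ := lt_of_le_of_ne hυ₀0 (Ne.symm h0)
    -- pick ε with e ε < υ₀/2
    obtain ⟨ε, heε, hεpos⟩ :=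
      ((he0.eventually (eventually_lt_nhds (by linarith : (0:ℝ) < υ₀/2))).and
        eventually_mem_nhdsWithin).exists
    simp only [Set.mem_Ioi] at hεpos
    set dε := d ε with hdef
    set eε := e ε with heef
    have hdpos : 0 < dε := hd ε hεpos
    have hepos : 0 ≤ eε := he ε hεpos
    set υ := υ₀ * (1 + dε/4) with hυdef
    have hυgt : υ₀ < υ := by nlinarith
    obtain ⟨Cυ, hCυpos, hCυ⟩ := habove υ hυgt
    set υ'' := υ - dε * (υ - eε) with hυ''def
    have hυ''lt : υ'' < υ₀ := by nlinarith
    have heυ : eε < υ := by linarith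
    set K := C ε * (c ^ (eε - υ) * Cυ) with hKdef
    have hKpos : 0 < K := by
      have := hC ε hεpos
      have := Real.rpow_pos_of_pos hc (eε - υ)
      positivity
    have hbound : ∀ δ : ℝ, 0 < δ → δ ≤ 1 → ST δ ≤ K * δ ^ (-υ'') := by
      intro δ hδ hδ1
      obtain ⟨δ', hδ'pos, hδ'lb, hδ'1, hrecδ⟩ := hrec ε hεpos δ hδ hδ1
      have hlbpos : 0 < δ ^ (1 - dε) * c := by positivity
      have hST' : ST δ' ≤ Cυ * δ' ^ (-υ) := hCυ δ' hδ'pos hδ'1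
      -- (δ'/δ)^e * δ'^{-υ} = δ^{-e} * δ'^{e-υ}
      have hfact : (δ' / δ) ^ eε * δ' ^ (-υ) = δ ^ (-eε) * δ' ^ (eε - υ) := by
        rw [Real.div_rpow hδ'pos.le hδ.le, Real.rpow_neg hδ.le,
          Real.rpow_sub hδ'pos, Real.rpow_neg hδ'pos.le]
        field_simp
      have hδ'bd : δ' ^ (eε - υ) ≤ (δ ^ (1 - dε) * c) ^ (eε - υ) :=
        Real.rpow_le_rpow_of_nonpos hlbpos hδ'lb (by linarith)
      have hexp : (δ ^ (1 - dε) * c) ^ (eε - υ)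
          = δ ^ ((1 - dε) * (eε - υ)) * c ^ (eε - υ) := by
        rw [Real.mul_rpow (by positivity) hc.le, Real.rpow_mul hδ.le]
      have hcomb : δ ^ (-eε) * δ ^ ((1 - dε) * (eε - υ)) = δ ^ (-υ'') := by
        rw [← Real.rpow_add hδ]
        congr 1
        rw [hυ''def]; ring
      have hCεpos : 0 < C ε := hC ε hεpos
      have hratpos : (0:ℝ) ≤ (δ' / δ) ^ eε := by positivity
      have hST'pos : 0 < ST δ' := lt_of_lt_of_le one_pos (hST1 δ' hδ'pos hδ'1)
      calc ST δ ≤ C ε * (δ' / δ) ^ eε * ST δ' := hrecδ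
        _ ≤ C ε * (δ' / δ) ^ eε * (Cυ * δ' ^ (-υ)) := by
            apply mul_le_mul_of_nonneg_left hST' (by positivity)
        _ = C ε * Cυ * ((δ' / δ) ^ eε * δ' ^ (-υ)) := by ring
        _ = C ε * Cυ * (δ ^ (-eε) * δ' ^ (eε - υ)) := by rw [hfact]
        _ ≤ C ε * Cυ * (δ ^ (-eε) * (δ ^ (1 - dε) * c) ^ (eε - υ)) := by
            apply mul_le_mul_of_nonneg_left _ (by positivity)
            apply mul_le_mul_of_nonneg_left hδ'bd (by positivity)
        _ = K * (δ ^ (-eε) * δ ^ ((1 - dε) * (eε - υ))) := by rw [hexp]; ring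
        _ = K * δ ^ (-υ'') := by rw [hcomb]
    -- now υ''' := max υ'' (υ₀/2) is in S, contradiction
    set υ''' := max υ'' (υ₀/2) with hυ'''def
    have hυ'''pos : 0 < υ''' := lt_of_lt_of_le (by linarith) (le_max_right _ _)
    have hυ'''lt : υ''' < υ₀ := max_lt hυ''lt (by linarith)
    have hmem : υ''' ∈ S :=
      ⟨hυ'''pos, bound_mono ST (le_max_left _ _) ⟨K, hKpos, hbound⟩⟩
    exact absurd (csInf_le hbdd hmem) (not_le.mpr hυ'''lt)
  intro υ hυpos
  exact habove υ (by rw [hυ₀eq]; exact hυpos)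
end
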